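/- arXiv:2309.02932 — 5 statements merged into one kernel-verified Lean document; each statement's English description precedes it below -/
import Mathlib

section
/- For all u, v ∈ B_n: u ≤_L v in the left weak order if and only if Inv(u) ⊆ Inv(v), Neg(u) ⊆ Neg(v), and Nsp(u) ⊆ Nsp(v). -/
/-- `w : Equiv.Perm ℤ` is the natural embedding of a signed permutation of `{±1,…,±n}`:
it anticommutes with negation and fixes every integer of absolute value greater than `n`. -/
def IsSignedPerm (n : ℕ) (w : Equiv.Perm ℤ) : Prop :=
  (∀ i : ℤ, w (-i) = -(w i)) ∧ ∀ i : ℤ, (n : ℤ) < |i| → w i = i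

/-- `Neg(w)` : the set of `i ∈ [n]` with `w_i < 0`. -/
noncomputable def NegSet (n : ℕ) (w : Equiv.Perm ℤ) : Finset ℤ :=
  (Finset.Icc 1 (n : ℤ)).filter fun i => w i < 0

/-- `Inv(w)` : the set of pairs `1 ≤ i < j ≤ n` with `w_i > w_j`. -/
noncomputable def InvSet (n : ℕ) (w : Equiv.Perm ℤ) : Finset (ℤ × ℤ) :=
  ((Finset.Icc 1 (n : ℤ)) ×ˢ (Finset.Icc 1 (n : ℤ))).filter fun p => p.1 < p.2 ∧ w p.2 < w p.1

/-- `Nsp(w)` : the set of pairs `1 ≤ i < j ≤ n` with `w_i + w_j < 0`. -/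
noncomputable def NspSet (n : ℕ) (w : Equiv.Perm ℤ) : Finset (ℤ × ℤ) :=
  ((Finset.Icc 1 (n : ℤ)) ×ˢ (Finset.Icc 1 (n : ℤ))).filter fun p => p.1 < p.2 ∧ w p.1 + w p.2 < 0

/-- The Coxeter length `ℓ(w) = #Neg(w) + #Inv(w) + #Nsp(w)` of `w ∈ B_n`. -/
noncomputable def len (n : ℕ) (w : Equiv.Perm ℤ) : ℕ :=
  (NegSet n w).card + (InvSet n w).card + (NspSet n w).card

/-- Left weak order on `B_n` : `u ≤_L w` iff `ℓ(w) = ℓ(u) + ℓ(w u⁻¹)`. -/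
def leL (n : ℕ) (u w : Equiv.Perm ℤ) : Prop := len n w = len n u + len n (w * u⁻¹)

/-- Right weak order on `B_n` : `u ≤_R w` iff `ℓ(w) = ℓ(u) + ℓ(u⁻¹ w)`. -/
def leR (n : ℕ) (u w : Equiv.Perm ℤ) : Prop := len n w = len n u + len n (u⁻¹ * w)

/-- `StsEqPat a p` : the signed standardization of the word `a` has one-line notation `p`. -/
def StsEqPat {m : ℕ} (a p : Fin m → ℤ) : Prop :=
  (∀ t, (a t < 0 ↔ p t < 0)) ∧ ∀ s t, (|a s| < |a t| ↔ |p s| < |p t|)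

/-- `StEqPat a p` : the ordinary standardization of the word `a` has one-line notation `p`. -/
def StEqPat {m : ℕ} (a p : Fin m → ℤ) : Prop := ∀ s t, a s < a t ↔ p s < p t

/-- The word `a` contains the signed pattern with one-line notation `p`. -/
def WordContainsPat {k m : ℕ} (a : Fin k → ℤ) (p : Fin m → ℤ) : Prop :=
  ∃ idx : Fin m → Fin k, StrictMono idx ∧ StsEqPat (a ∘ idx) p

/-- The word `a` contains the ordinary pattern with one-line notation `p`. -/
def WordContainsStPat {k m : ℕ} (a : Fin k → ℤ) (p : Fin m → ℤ) : Prop :=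
  ∃ idx : Fin m → Fin k, StrictMono idx ∧ StEqPat (a ∘ idx) p

/-- Word-level separability in the signed sense: the word avoids the six patterns
`(-2)1, 2(-1), 3142, 2413, (-3)(-1)(-4)(-2), (-2)(-4)(-1)(-3)`. -/
def SepWordSigned {k : ℕ} (a : Fin k → ℤ) : Prop :=
  ¬ WordContainsPat a ![-2, 1] ∧ ¬ WordContainsPat a ![2, -1] ∧
  ¬ WordContainsPat a ![3, 1, 4, 2] ∧ ¬ WordContainsPat a ![2, 4, 1, 3] ∧
  ¬ WordContainsPat a ![-3, -1, -4, -2] ∧ ¬ WordContainsPat a ![-2, -4, -1, -3]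

/-- Word-level separability in the ordinary sense: the word avoids `3142` and `2413`. -/
def SepWordOrd {k : ℕ} (a : Fin k → ℤ) : Prop :=
  ¬ WordContainsStPat a ![3, 1, 4, 2] ∧ ¬ WordContainsStPat a ![2, 4, 1, 3]

/-- The one-line notation `w_1 w_2 ⋯ w_n` of `w ∈ B_n`. -/
def oneLine (n : ℕ) (w : Equiv.Perm ℤ) : Fin n → ℤ := fun t => w ((t : ℤ) + 1)

/-- `w ∈ B_n` is separable. -/
def SepSigned (n : ℕ) (w : Equiv.Perm ℤ) : Prop := SepWordSigned (oneLine n w)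

/-- `w ∈ B_n` is minimal non-separable: `w` is not separable but for every
`i ∈ {0,…,n-1}` both `sts(w_1⋯w_i)` and `st(w_{i+1}⋯w_n)` are separable. -/
def MinNonSep (n : ℕ) (w : Equiv.Perm ℤ) : Prop :=
  ¬ SepSigned n w ∧
    ∀ i : ℕ, i ≤ n - 1 →
      SepWordSigned (fun t : Fin i => w ((t : ℤ) + 1)) ∧
      SepWordOrd (fun t : Fin (n - i) => w ((i : ℤ) + (t : ℤ) + 1))

/-- The set `B_n` of signed permutations inside `Equiv.Perm ℤ`. -/
def SignedPerms (n : ℕ) : Set (Equiv.Perm ℤ) := {w | IsSignedPerm n w}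

/-- The interval `[e,w]_L` in the left weak order on `B_n`. -/
def IntervalL (n : ℕ) (w : Equiv.Perm ℤ) : Set (Equiv.Perm ℤ) :=
  {x | IsSignedPerm n x ∧ leL n x w}

/-- The interval `[e,w]_R` in the right weak order on `B_n`. -/
def IntervalR (n : ℕ) (w : Equiv.Perm ℤ) : Set (Equiv.Perm ℤ) :=
  {x | IsSignedPerm n x ∧ leR n x w}

/-- `(X, Y)` is a splitting of `B_n` : multiplication `X × Y → B_n` is
length-additive and a bijection. -/
def IsSplitting (n : ℕ) (X Y : Set (Equiv.Perm ℤ)) : Prop :=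
  (∀ x ∈ X, ∀ y ∈ Y, len n (x * y) = len n x + len n y) ∧
  Set.BijOn (fun p : Equiv.Perm ℤ × Equiv.Perm ℤ => p.1 * p.2) (X ×ˢ Y) (SignedPerms n)

/-- The generalized quotient `B_n / U`. -/
def GenQuot (n : ℕ) (U : Set (Equiv.Perm ℤ)) : Set (Equiv.Perm ℤ) :=
  {w | IsSignedPerm n w ∧ ∀ x ∈ U, len n (w * x) = len n w + len n x}

/-- Number of elements of `[e,w]_L` of length `d`. -/
noncomputable def rankCountL (n : ℕ) (w : Equiv.Perm ℤ) (d : ℕ) : ℕ :=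
  {u | u ∈ IntervalL n w ∧ len n u = d}.ncard

/-- Number of elements of `[e,w]_R` of length `d`. -/
noncomputable def rankCountR (n : ℕ) (w : Equiv.Perm ℤ) (d : ℕ) : ℕ :=
  {u | u ∈ IntervalR n w ∧ len n u = d}.ncard

/-- Number of elements `u` with `w ≤_L u` and `ℓ(u) = ℓ(w) + d`. -/
noncomputable def rankCountUp (n : ℕ) (w : Equiv.Perm ℤ) (d : ℕ) : ℕ :=
  {u | IsSignedPerm n u ∧ leL n w u ∧ len n u = len n w + d}.ncard

/-- The simple generators of `B_n` : `sGen 0 = s_0` interchanges `1` and `-1`, and for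
`j ≥ 1`, `sGen j = s_j` interchanges `j, j+1` and `-j, -(j+1)`. -/
def sGen (j : ℕ) : Equiv.Perm ℤ :=
  if j = 0 then Equiv.swap 1 (-1)
  else Equiv.swap (j : ℤ) ((j : ℤ) + 1) * Equiv.swap (-(j : ℤ)) (-((j : ℤ) + 1))

/-- A sequence `f 0, f 1, …` is unimodal. -/
def UnimodalSeq (f : ℕ → ℕ) : Prop :=
  ∃ m, (∀ d e, d ≤ e → e ≤ m → f d ≤ f e) ∧ ∀ d e, m ≤ d → d ≤ e → f e ≤ f d

/-- The rank generating function of `[e,w]_L`. -/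
noncomputable def lowerGF (n : ℕ) (w : Equiv.Perm ℤ) : Polynomial ℕ :=
  ∑ d ∈ Finset.range (len n w + 1), Polynomial.C (rankCountL n w d) * Polynomial.X ^ d

/-- The rank generating function of `[w,w₀]_L`, shifted by `q^{-ℓ(w)}`. -/
noncomputable def upperGF (n : ℕ) (w : Equiv.Perm ℤ) : Polynomial ℕ :=
  ∑ d ∈ Finset.range (n * n + 1), Polynomial.C (rankCountUp n w d) * Polynomial.X ^ d

theorem Equiv.Perm.apply_inv_self {α : Type*} (f : Equiv.Perm α) (x : α) : f (f⁻¹ x) = x :=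
  Equiv.apply_symm_apply f x

theorem Equiv.Perm.inv_apply_self {α : Type*} (f : Equiv.Perm α) (x : α) : f⁻¹ (f x) = x :=
  Equiv.symm_apply_apply f x

section Aux

variable {n : ℕ} {z u v : Equiv.Perm ℤ}

lemma sp_zero (h : IsSignedPerm n z) : z 0 = 0 := by
  have := h.1 0
  simp at this
  omega

lemma sp_abs_le (h : IsSignedPerm n z) {i : ℤ} (hi : |i| ≤ (n : ℤ)) : |z i| ≤ (n : ℤ) := by
  by_contra hc
  push_neg at hc
  have h2 : z (z i) = z i := h.2 (z i) hc
  have h3 : z i = i := z.injective h2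
  rw [h3] at hc
  omega

lemma sp_inv (h : IsSignedPerm n z) : IsSignedPerm n z⁻¹ := by
  constructor
  · intro i
    apply z.injective
    rw [Equiv.Perm.apply_inv_self, h.1, Equiv.Perm.apply_inv_self]
  · intro i hi
    apply z.injective
    rw [Equiv.Perm.apply_inv_self, h.2 i hi]

lemma sp_mul (h : IsSignedPerm n u) (h' : IsSignedPerm n v) : IsSignedPerm n (u * v) := by
  constructor
  · intro i
    simp only [Equiv.Perm.mul_apply, h'.1, h.1]
  · intro i hi
    simp only [Equiv.Perm.mul_apply, h'.2 i hi, h.2 i hi]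

lemma sp_abs_ne (h : IsSignedPerm n z) {i j : ℤ} (h1 : i ≠ j) (h2 : i ≠ -j) :
    |z i| ≠ |z j| := by
  rw [Ne, abs_eq_abs]
  push_neg
  constructor
  · intro hc; exact h1 (z.injective hc)
  · intro hc
    rw [← h.1] at hc
    exact h2 (z.injective hc)

/-- Canonical positive-root representative of the pair `(a, b)` (the root `e_b - e_a`). -/
def canon (a b : ℤ) : ℤ × ℤ :=
  if |a| < |b| then (if 0 < b then (a, b) else (-a, -b))
  else (if 0 < a then (b, a) else (-b, -a))

lemma canon_spec (a b : ℤ) (h : |a| ≠ |b|) :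
    (canon a b = (a, b) ∧ |a| < b) ∨ (canon a b = (-a, -b) ∧ |a| < -b) ∨
    (canon a b = (b, a) ∧ |b| < a) ∨ (canon a b = (-b, -a) ∧ |b| < -a) := by
  unfold canon
  split_ifs with h1 h2 h3
  · exact Or.inl ⟨rfl, by simp only [Int.abs_eq_natAbs] at *; omega⟩
  · exact Or.inr (Or.inl ⟨rfl, by simp only [Int.abs_eq_natAbs] at *; omega⟩)
  · exact Or.inr (Or.inr (Or.inl ⟨rfl, by simp only [Int.abs_eq_natAbs] at *; omega⟩))
  · exact Or.inr (Or.inr (Or.inr ⟨rfl, by simp only [Int.abs_eq_natAbs] at *; omega⟩))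

lemma canon_of {x y : ℤ} (h : |x| < y) :
    canon x y = (x, y) ∧ canon (-x) (-y) = (x, y) ∧ canon y x = (x, y) ∧
      canon (-y) (-x) = (x, y) := by
  refine ⟨?_, ?_, ?_, ?_⟩ <;>
    · unfold canon
      split_ifs <;> first
        | rfl
        | (simp only [Prod.mk.injEq]; constructor <;>
            (simp only [Int.abs_eq_natAbs, abs_neg] at *; omega))
        | (exfalso; simp only [Int.abs_eq_natAbs, abs_neg] at *; omega)

/-- The index set of positive roots of `B_n`: pairs `(i,j)` with `|i| < j ≤ n`. -/
noncomputable def Dset (n : ℕ) : Finset (ℤ × ℤ) :=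
  ((Finset.Icc (-(n : ℤ)) n) ×ˢ (Finset.Icc 1 (n : ℤ))).filter fun p => |p.1| < p.2

lemma mem_Dset {p : ℤ × ℤ} : p ∈ Dset n ↔ |p.1| < p.2 ∧ p.2 ≤ (n : ℤ) := by
  simp only [Dset, Finset.mem_filter, Finset.mem_product, Finset.mem_Icc]
  simp only [Int.abs_eq_natAbs] at *
  omega

/-- The inversion set of `z` as a set of positive-root indices. -/
noncomputable def Nfin (n : ℕ) (z : Equiv.Perm ℤ) : Finset (ℤ × ℤ) :=
  (Dset n).filter fun p => z p.2 < z p.1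

lemma mem_Nfin {p : ℤ × ℤ} : p ∈ Nfin n z ↔ (|p.1| < p.2 ∧ p.2 ≤ (n : ℤ)) ∧ z p.2 < z p.1 := by
  rw [Nfin, Finset.mem_filter, mem_Dset]

lemma canon_mem_Dset (h : IsSignedPerm n z) {p : ℤ × ℤ} (hp : p ∈ Dset n) :
    canon (z p.1) (z p.2) ∈ Dset n := by
  rw [mem_Dset] at hp
  have ha : |z p.1| ≤ (n : ℤ) := sp_abs_le h (by simp only [Int.abs_eq_natAbs] at *; omega)
  have hb : |z p.2| ≤ (n : ℤ) := sp_abs_le h (by simp only [Int.abs_eq_natAbs] at *; omega)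
  have hne : |z p.1| ≠ |z p.2| :=
    sp_abs_ne h (by simp only [Int.abs_eq_natAbs] at *; omega)
      (by simp only [Int.abs_eq_natAbs] at *; omega)
  rcases canon_spec (z p.1) (z p.2) hne with ⟨he, hl⟩ | ⟨he, hl⟩ | ⟨he, hl⟩ | ⟨he, hl⟩ <;>
    rw [he, mem_Dset] <;> simp only [Int.abs_eq_natAbs] at * <;> omega

lemma canon_canon (h : IsSignedPerm n z) {p : ℤ × ℤ} (hp : p ∈ Dset n) :
    canon (z⁻¹ (canon (z p.1) (z p.2)).1) (z⁻¹ (canon (z p.1) (z p.2)).2) = p := by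
  rw [mem_Dset] at hp
  have hne : |z p.1| ≠ |z p.2| :=
    sp_abs_ne h (by simp only [Int.abs_eq_natAbs] at *; omega)
      (by simp only [Int.abs_eq_natAbs] at *; omega)
  have hinv : ∀ x : ℤ, z⁻¹ (-(z x)) = -x := by
    intro x; rw [← h.1, Equiv.Perm.inv_apply_self]
  have hC := canon_of hp.1
  rcases canon_spec (z p.1) (z p.2) hne with ⟨he, _⟩ | ⟨he, _⟩ | ⟨he, _⟩ | ⟨he, _⟩ <;>
    rw [he] <;>
    simp only [Equiv.Perm.inv_apply_self, hinv] <;>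
    rw [show p = (p.1, p.2) from rfl]
  · exact hC.1
  · exact hC.2.1
  · exact hC.2.2.1
  · exact hC.2.2.2

end Aux
section Aux2

variable {n : ℕ} {z u v : Equiv.Perm ℤ}

lemma Nfin_subset_Dset : Nfin n z ⊆ Dset n := Finset.filter_subset _ _

lemma mem_symm_iff (hu : IsSignedPerm n u) (hv : IsSignedPerm n v) {p : ℤ × ℤ}
    (hp : p ∈ Dset n) :
    p ∈ Nfin n (v * u⁻¹) ↔ canon (u⁻¹ p.1) (u⁻¹ p.2) ∈ symmDiff (Nfin n v) (Nfin n u) := by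
  have hui := sp_inv hu
  have hpD := mem_Dset.1 hp
  have hne : |u⁻¹ p.1| ≠ |u⁻¹ p.2| :=
    sp_abs_ne hui (by simp only [Int.abs_eq_natAbs] at *; omega)
      (by simp only [Int.abs_eq_natAbs] at *; omega)
  have hqD := mem_Dset.1 (canon_mem_Dset hui hp)
  set A := u⁻¹ p.1 with hA
  set B := u⁻¹ p.2 with hB
  have huA : u A = p.1 := Equiv.Perm.apply_inv_self u p.1
  have huB : u B = p.2 := Equiv.Perm.apply_inv_self u p.2
  have hunA : u (-A) = -p.1 := by rw [hu.1, huA]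
  have hunB : u (-B) = -p.2 := by rw [hu.1, huB]
  have hvnA : v (-A) = -(v A) := hv.1 A
  have hvnB : v (-B) = -(v B) := hv.1 B
  have hvAB : v A ≠ v B := by
    intro e
    have h1 : A = B := v.injective e
    have h2 : p.1 = p.2 := by rw [← huA, ← huB, h1]
    simp only [Int.abs_eq_natAbs] at hpD
    omega
  have hLHS : (p ∈ Nfin n (v * u⁻¹)) ↔ v B < v A := by
    rw [mem_Nfin]
    simp only [Equiv.Perm.mul_apply, ← hA, ← hB]
    tauto
  rw [hLHS, Finset.mem_symmDiff]
  rcases canon_spec A B hne with ⟨he, hl⟩ | ⟨he, hl⟩ | ⟨he, hl⟩ | ⟨he, hl⟩ <;>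
    rw [he] at hqD ⊢ <;>
    simp only [mem_Nfin, huA, huB, hunA, hunB, hvnA, hvnB, abs_neg] at hqD ⊢ <;>
    simp only [Int.abs_eq_natAbs] at * <;>
    omega

lemma card_key (hu : IsSignedPerm n u) (hv : IsSignedPerm n v) :
    (Nfin n (v * u⁻¹)).card = (symmDiff (Nfin n v) (Nfin n u)).card := by
  have hui := sp_inv hu
  refine Finset.card_bij' (fun p _ => canon (u⁻¹ p.1) (u⁻¹ p.2))
    (fun q _ => canon (u q.1) (u q.2)) ?_ ?_ ?_ ?_
  · intro p hp
    exact (mem_symm_iff hu hv (Nfin_subset_Dset hp)).1 hp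
  · intro q hq
    have hqD : q ∈ Dset n := by
      rcases Finset.mem_symmDiff.1 hq with ⟨h1, _⟩ | ⟨h1, _⟩ <;> exact Nfin_subset_Dset h1
    rw [mem_symm_iff hu hv (canon_mem_Dset hu hqD), canon_canon hu hqD]
    exact hq
  · intro p hp
    have := canon_canon hui (Nfin_subset_Dset hp)
    simpa using this
  · intro q hq
    have hqD : q ∈ Dset n := by
      rcases Finset.mem_symmDiff.1 hq with ⟨h1, _⟩ | ⟨h1, _⟩ <;> exact Nfin_subset_Dset h1
    exact canon_canon hu hqD

lemma mem_InvSet {p : ℤ × ℤ} :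
    p ∈ InvSet n z ↔ (1 ≤ p.1 ∧ p.1 < p.2 ∧ p.2 ≤ (n : ℤ)) ∧ z p.2 < z p.1 := by
  simp only [InvSet, Finset.mem_filter, Finset.mem_product, Finset.mem_Icc]
  constructor
  · rintro ⟨⟨⟨a1, a2⟩, b1, b2⟩, h3, h4⟩
    exact ⟨⟨a1, h3, b2⟩, h4⟩
  · rintro ⟨⟨a1, h3, b2⟩, h4⟩
    exact ⟨⟨⟨a1, by omega⟩, by omega, b2⟩, h3, h4⟩
lemma mem_NegSet {j : ℤ} : j ∈ NegSet n z ↔ (1 ≤ j ∧ j ≤ (n : ℤ)) ∧ z j < 0 := by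
  simp only [NegSet, Finset.mem_filter, Finset.mem_Icc]
lemma mem_NspSet {p : ℤ × ℤ} :
    p ∈ NspSet n z ↔ (1 ≤ p.1 ∧ p.1 < p.2 ∧ p.2 ≤ (n : ℤ)) ∧ z p.1 + z p.2 < 0 := by
  simp only [NspSet, Finset.mem_filter, Finset.mem_product, Finset.mem_Icc]
  constructor
  · rintro ⟨⟨⟨a1, a2⟩, b1, b2⟩, h3, h4⟩
    exact ⟨⟨a1, h3, b2⟩, h4⟩
  · rintro ⟨⟨a1, h3, b2⟩, h4⟩
    exact ⟨⟨⟨a1, by omega⟩, by omega, b2⟩, h3, h4⟩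

end Aux2
section Aux3

variable {n : ℕ} {z u v : Equiv.Perm ℤ}

lemma Nfin_filter_pos : (Nfin n z).filter (fun p => 0 < p.1) = InvSet n z := by
  ext p
  rw [Finset.mem_filter, mem_Nfin, mem_InvSet]
  constructor
  · rintro ⟨⟨⟨h1, h2⟩, h3⟩, h4⟩
    refine ⟨⟨by omega, ?_, h2⟩, h3⟩
    simp only [Int.abs_eq_natAbs] at h1; omega
  · rintro ⟨⟨h1, h2, h3⟩, h4⟩
    refine ⟨⟨⟨?_, h3⟩, h4⟩, by omega⟩
    simp only [Int.abs_eq_natAbs]; omega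

lemma Nfin_filter_zero (h : IsSignedPerm n z) :
    (Nfin n z).filter (fun p => p.1 = 0) = (NegSet n z).image (fun j => ((0 : ℤ), j)) := by
  ext p
  rw [Finset.mem_filter, mem_Nfin, Finset.mem_image]
  constructor
  · rintro ⟨⟨⟨h1, h2⟩, h3⟩, h4⟩
    refine ⟨p.2, mem_NegSet.2 ⟨⟨?_, h2⟩, ?_⟩, ?_⟩
    · simp only [Int.abs_eq_natAbs] at h1; omega
    · rw [h4, sp_zero h] at h3; exact h3
    · rw [← h4]
  · rintro ⟨j, hj, he⟩
    rw [mem_NegSet] at hj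
    subst he
    refine ⟨⟨⟨?_, hj.1.2⟩, ?_⟩, rfl⟩
    · simp only [Int.abs_eq_natAbs]; omega
    · simpa [sp_zero h] using hj.2

lemma Nfin_filter_neg (h : IsSignedPerm n z) :
    (Nfin n z).filter (fun p => p.1 < 0) = (NspSet n z).image (fun p => (-p.1, p.2)) := by
  ext p
  rw [Finset.mem_filter, mem_Nfin, Finset.mem_image]
  constructor
  · rintro ⟨⟨⟨h1, h2⟩, h3⟩, h4⟩
    refine ⟨(-p.1, p.2), mem_NspSet.2 ⟨⟨?_, ?_, h2⟩, ?_⟩, ?_⟩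
    · simp only [Int.abs_eq_natAbs]; omega
    · simp only [Int.abs_eq_natAbs] at h1; omega
    · have := h.1 p.1
      simp only [neg_neg] at *
      omega
    · simp
  · rintro ⟨q, hq, he⟩
    rw [mem_NspSet] at hq
    obtain ⟨⟨h1, h2, h3⟩, h4⟩ := hq
    have e1 : p.1 = -q.1 := by rw [← he]
    have e2 : p.2 = q.2 := by rw [← he]
    refine ⟨⟨⟨?_, by omega⟩, ?_⟩, by omega⟩
    · simp only [Int.abs_eq_natAbs]; omega
    · rw [e1, e2, h.1 q.1]; omega

lemma len_eq (h : IsSignedPerm n z) : len n z = (Nfin n z).card := by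
  have h0 := Finset.card_filter_add_card_filter_not
    (s := Nfin n z) (p := fun p => 0 < p.1)
  have h1 := Finset.card_filter_add_card_filter_not
    (s := (Nfin n z).filter fun p => ¬0 < p.1) (p := fun p => p.1 = 0)
  rw [Finset.filter_filter, Finset.filter_filter] at h1
  have e1 : ((Nfin n z).filter fun p => ¬0 < p.1 ∧ p.1 = 0) =
      (Nfin n z).filter fun p => p.1 = 0 :=
    Finset.filter_congr (fun x _ => by constructor <;> intro h <;> omega)
  have e2 : ((Nfin n z).filter fun p => ¬0 < p.1 ∧ ¬p.1 = 0) =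
      (Nfin n z).filter fun p => p.1 < 0 :=
    Finset.filter_congr (fun x _ => by constructor <;> intro h <;> omega)
  rw [e1, e2, Nfin_filter_zero h, Nfin_filter_neg h] at h1
  rw [Nfin_filter_pos] at h0
  rw [Finset.card_image_of_injective _ (fun a b hab => by simpa using hab)] at h1
  rw [Finset.card_image_of_injective _
    (fun a b hab => by
      simp only [Prod.mk.injEq, neg_inj] at hab
      exact Prod.ext hab.1 hab.2)] at h1
  unfold len
  omega

lemma Nfin_subset_iff (hu : IsSignedPerm n u) (hv : IsSignedPerm n v) :
    Nfin n u ⊆ Nfin n v ↔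
      InvSet n u ⊆ InvSet n v ∧ NegSet n u ⊆ NegSet n v ∧ NspSet n u ⊆ NspSet n v := by
  constructor
  · intro H
    refine ⟨?_, ?_, ?_⟩
    · intro p hp
      rw [mem_InvSet] at hp ⊢
      have hm : p ∈ Nfin n u := by
        rw [mem_Nfin]
        refine ⟨⟨?_, hp.1.2.2⟩, hp.2⟩
        simp only [Int.abs_eq_natAbs]; omega
      have h2 := mem_Nfin.1 (H hm)
      exact ⟨hp.1, h2.2⟩
    · intro j hj
      rw [mem_NegSet] at hj ⊢
      have hm : ((0 : ℤ), j) ∈ Nfin n u := by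
        rw [mem_Nfin]
        refine ⟨⟨by have := hj.1.1; simp; omega, hj.1.2⟩, by simpa [sp_zero hu] using hj.2⟩
      have h2 := mem_Nfin.1 (H hm)
      refine ⟨hj.1, ?_⟩
      have := h2.2
      rwa [sp_zero hv] at this
    · intro p hp
      rw [mem_NspSet] at hp ⊢
      have hm : (-p.1, p.2) ∈ Nfin n u := by
        rw [mem_Nfin]
        refine ⟨⟨?_, hp.1.2.2⟩, ?_⟩
        · simp only [Int.abs_eq_natAbs]; omega
        · have h5 := hu.1 p.1
          have h4 := hp.2
          show u p.2 < u (-p.1)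
          omega
      have h2 := mem_Nfin.1 (H hm)
      refine ⟨hp.1, ?_⟩
      have h3 : v p.2 < v (-p.1) := h2.2
      rw [hv.1 p.1] at h3
      omega
  · rintro ⟨hI, hN, hS⟩ p hp
    rw [mem_Nfin] at hp ⊢
    obtain ⟨⟨hab, hbn⟩, hz⟩ := hp
    rcases lt_trichotomy p.1 0 with h | h | h
    · have hm : (-p.1, p.2) ∈ NspSet n u := by
        rw [mem_NspSet]
        refine ⟨⟨by omega, ?_, hbn⟩, ?_⟩
        · simp only [Int.abs_eq_natAbs] at hab; omega
        · have h5 := hu.1 p.1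
          show u (-p.1) + u p.2 < 0
          omega
      have h2 : v (-p.1) + v p.2 < 0 := (mem_NspSet.1 (hS hm)).2
      refine ⟨⟨hab, hbn⟩, ?_⟩
      rw [hv.1 p.1] at h2
      omega
    · have hm : p.2 ∈ NegSet n u := by
        rw [mem_NegSet]
        refine ⟨⟨?_, hbn⟩, ?_⟩
        · simp only [Int.abs_eq_natAbs] at hab; omega
        · rw [h, sp_zero hu] at hz; exact hz
      have h2 := (mem_NegSet.1 (hN hm)).2
      refine ⟨⟨hab, hbn⟩, ?_⟩
      rw [h, sp_zero hv]
      exact h2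
    · have hm : p ∈ InvSet n u := by
        rw [mem_InvSet]
        refine ⟨⟨by omega, ?_, hbn⟩, hz⟩
        simp only [Int.abs_eq_natAbs] at hab; omega
      exact ⟨⟨hab, hbn⟩, (mem_InvSet.1 (hI hm)).2⟩

lemma card_arith {α : Type*} [DecidableEq α] (A B : Finset α) :
    B.card = A.card + (symmDiff B A).card ↔ A ⊆ B := by
  have h1 : (symmDiff B A).card = (B \ A).card + (A \ B).card := by
    rw [symmDiff_def, Finset.sup_eq_union,
      Finset.card_union_of_disjoint disjoint_sdiff_sdiff]
  have h2 := Finset.card_inter_add_card_sdiff A B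
  have h3 := Finset.card_inter_add_card_sdiff B A
  have h4 : (A ∩ B).card = (B ∩ A).card := by rw [Finset.inter_comm]
  constructor
  · intro he
    have h5 : (A \ B).card = 0 := by omega
    exact Finset.sdiff_eq_empty_iff_subset.1 (Finset.card_eq_zero.1 h5)
  · intro hs
    have h5 : A \ B = ∅ := Finset.sdiff_eq_empty_iff_subset.2 hs
    have h6 : (A \ B).card = 0 := by rw [h5]; rfl
    omega

end Aux3
/-- `u ≤_L v` iff `Inv(u) ⊆ Inv(v)`, `Neg(u) ⊆ Neg(v)` and `Nsp(u) ⊆ Nsp(v)`. -/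
theorem leL_iff_subsets (n : ℕ) (u v : Equiv.Perm ℤ)
    (hu : IsSignedPerm n u) (hv : IsSignedPerm n v) :
    leL n u v ↔ InvSet n u ⊆ InvSet n v ∧ NegSet n u ⊆ NegSet n v ∧ NspSet n u ⊆ NspSet n v := by
  unfold leL
  rw [len_eq hv, len_eq hu, len_eq (sp_mul hv (sp_inv hu)), card_key hu hv,
    card_arith, Nfin_subset_iff hu hv]
end

section
/- A signed permutation w ∈ B_n is separable if and only if w avoids the patterns (-2)1 and 2(-1) and the standardization st(w) (an ordinary permutation of [n]) avoids the patterns 3142 and 2413. -/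
section SepHelpers

variable {k : ℕ} {a : Fin k → ℤ}

private lemma strictMono_pair' {i j : Fin k} (h : i < j) : StrictMono ![i,j] := by
  intro s t hst; fin_cases s <;> fin_cases t <;> simp_all

private lemma strictMono_quad' {i0 i1 i2 i3 : Fin k} (h01 : i0 < i1) (h12 : i1 < i2)
    (h23 : i2 < i3) : StrictMono ![i0,i1,i2,i3] := by
  intro s t hst; fin_cases s <;> fin_cases t <;> simp_all <;> omega

private lemma mk_n21 {i j : Fin k} (hij : i < j) (hi : a i < 0) (hj : 0 < a j)
    (h : a j < -a i) : WordContainsPat a ![-2,1] := by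
  refine ⟨![i,j], strictMono_pair' hij, ?_, ?_⟩
  · intro t; fin_cases t <;> simp <;> omega
  · intro s t
    fin_cases s <;> fin_cases t <;> simp [abs_of_neg hi, abs_of_pos hj] <;> omega

private lemma mk_2n1 {i j : Fin k} (hij : i < j) (hi : 0 < a i) (hj : a j < 0)
    (h : -a j < a i) : WordContainsPat a ![2,-1] := by
  refine ⟨![i,j], strictMono_pair' hij, ?_, ?_⟩
  · intro t; fin_cases t <;> simp <;> omega
  · intro s t
    fin_cases s <;> fin_cases t <;> simp [abs_of_pos hi, abs_of_neg hj] <;> omega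

private lemma mk_3142 {i0 i1 i2 i3 : Fin k} (h01 : i0 < i1) (h12 : i1 < i2)
    (h23 : i2 < i3) (hp : 0 < a i1) (c1 : a i1 < a i3) (c2 : a i3 < a i0) (c3 : a i0 < a i2) :
    WordContainsPat a ![3,1,4,2] := by
  have p3 : 0 < a i3 := lt_trans hp c1
  have p0 : 0 < a i0 := lt_trans p3 c2
  have p2 : 0 < a i2 := lt_trans p0 c3
  refine ⟨![i0,i1,i2,i3], strictMono_quad' h01 h12 h23, ?_, ?_⟩
  · intro t; fin_cases t <;> simp <;> omega
  · intro s t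
    fin_cases s <;> fin_cases t <;>
      simp [abs_of_pos p0, abs_of_pos hp, abs_of_pos p2, abs_of_pos p3] <;> omega

private lemma mk_2413 {i0 i1 i2 i3 : Fin k} (h01 : i0 < i1) (h12 : i1 < i2)
    (h23 : i2 < i3) (hp : 0 < a i2) (c1 : a i2 < a i0) (c2 : a i0 < a i3) (c3 : a i3 < a i1) :
    WordContainsPat a ![2,4,1,3] := by
  have p0 : 0 < a i0 := lt_trans hp c1
  have p3 : 0 < a i3 := lt_trans p0 c2
  have p1 : 0 < a i1 := lt_trans p3 c3
  refine ⟨![i0,i1,i2,i3], strictMono_quad' h01 h12 h23, ?_, ?_⟩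
  · intro t; fin_cases t <;> simp <;> omega
  · intro s t
    fin_cases s <;> fin_cases t <;>
      simp [abs_of_pos p0, abs_of_pos p1, abs_of_pos hp, abs_of_pos p3] <;> omega

private lemma mk_n3142 {i0 i1 i2 i3 : Fin k} (h01 : i0 < i1) (h12 : i1 < i2)
    (h23 : i2 < i3) (hn : a i1 < 0) (c1 : a i2 < a i0) (c2 : a i0 < a i3) (c3 : a i3 < a i1) :
    WordContainsPat a ![-3,-1,-4,-2] := by
  have n3 : a i3 < 0 := lt_trans c3 hn
  have n0 : a i0 < 0 := lt_trans c2 n3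
  have n2 : a i2 < 0 := lt_trans c1 n0
  refine ⟨![i0,i1,i2,i3], strictMono_quad' h01 h12 h23, ?_, ?_⟩
  · intro t; fin_cases t <;> simp <;> omega
  · intro s t
    fin_cases s <;> fin_cases t <;>
      simp [abs_of_neg n0, abs_of_neg hn, abs_of_neg n2, abs_of_neg n3] <;> omega

private lemma mk_n2413 {i0 i1 i2 i3 : Fin k} (h01 : i0 < i1) (h12 : i1 < i2)
    (h23 : i2 < i3) (hn : a i2 < 0) (c1 : a i1 < a i3) (c2 : a i3 < a i0) (c3 : a i0 < a i2) :
    WordContainsPat a ![-2,-4,-1,-3] := by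
  have n0 : a i0 < 0 := lt_trans c3 hn
  have n3 : a i3 < 0 := lt_trans c2 n0
  have n1 : a i1 < 0 := lt_trans c1 n3
  refine ⟨![i0,i1,i2,i3], strictMono_quad' h01 h12 h23, ?_, ?_⟩
  · intro t; fin_cases t <;> simp <;> omega
  · intro s t
    fin_cases s <;> fin_cases t <;>
      simp [abs_of_neg n0, abs_of_neg n1, abs_of_neg hn, abs_of_neg n3] <;> omega

private lemma mkSt_3142 {i0 i1 i2 i3 : Fin k} (h01 : i0 < i1) (h12 : i1 < i2)
    (h23 : i2 < i3) (c1 : a i1 < a i3) (c2 : a i3 < a i0) (c3 : a i0 < a i2) :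
    WordContainsStPat a ![3,1,4,2] := by
  refine ⟨![i0,i1,i2,i3], strictMono_quad' h01 h12 h23, ?_⟩
  intro s t; fin_cases s <;> fin_cases t <;> simp <;> omega

private lemma mkSt_2413 {i0 i1 i2 i3 : Fin k} (h01 : i0 < i1) (h12 : i1 < i2)
    (h23 : i2 < i3) (c1 : a i2 < a i0) (c2 : a i0 < a i3) (c3 : a i3 < a i1) :
    WordContainsStPat a ![2,4,1,3] := by
  refine ⟨![i0,i1,i2,i3], strictMono_quad' h01 h12 h23, ?_⟩
  intro s t; fin_cases s <;> fin_cases t <;> simp <;> omega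

private lemma extSt_3142 (h : WordContainsStPat a ![3,1,4,2]) :
    ∃ i0 i1 i2 i3 : Fin k, i0 < i1 ∧ i1 < i2 ∧ i2 < i3 ∧
      a i1 < a i3 ∧ a i3 < a i0 ∧ a i0 < a i2 := by
  obtain ⟨idx, hm, hst⟩ := h
  refine ⟨idx 0, idx 1, idx 2, idx 3, hm (by decide), hm (by decide), hm (by decide),
    ?_, ?_, ?_⟩
  · have := hst 1 3; simpa using this
  · have := hst 3 0; simpa using this
  · have := hst 0 2; simpa using this

private lemma extSt_2413 (h : WordContainsStPat a ![2,4,1,3]) :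
    ∃ i0 i1 i2 i3 : Fin k, i0 < i1 ∧ i1 < i2 ∧ i2 < i3 ∧
      a i2 < a i0 ∧ a i0 < a i3 ∧ a i3 < a i1 := by
  obtain ⟨idx, hm, hst⟩ := h
  refine ⟨idx 0, idx 1, idx 2, idx 3, hm (by decide), hm (by decide), hm (by decide),
    ?_, ?_, ?_⟩
  · have := hst 2 0; simpa using this
  · have := hst 0 3; simpa using this
  · have := hst 3 1; simpa using this

private lemma ext_3142 (h0 : ∀ t, a t ≠ 0) (h : WordContainsPat a ![3,1,4,2]) :
    ∃ i0 i1 i2 i3 : Fin k, i0 < i1 ∧ i1 < i2 ∧ i2 < i3 ∧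
      a i1 < a i3 ∧ a i3 < a i0 ∧ a i0 < a i2 := by
  obtain ⟨idx, hm, hsgn, habs⟩ := h
  have p0 : 0 < a (idx 0) := by
    have := hsgn 0; simp at this; exact lt_of_le_of_ne (by omega) (Ne.symm (h0 _))
  have p1 : 0 < a (idx 1) := by
    have := hsgn 1; simp at this; exact lt_of_le_of_ne (by omega) (Ne.symm (h0 _))
  have p2 : 0 < a (idx 2) := by
    have := hsgn 2; simp at this; exact lt_of_le_of_ne (by omega) (Ne.symm (h0 _))
  have p3 : 0 < a (idx 3) := by
    have := hsgn 3; simp at this; exact lt_of_le_of_ne (by omega) (Ne.symm (h0 _))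
  refine ⟨idx 0, idx 1, idx 2, idx 3, hm (by decide), hm (by decide), hm (by decide),
    ?_, ?_, ?_⟩
  · have := habs 1 3; simp [abs_of_pos p1, abs_of_pos p3] at this; omega
  · have := habs 3 0; simp [abs_of_pos p3, abs_of_pos p0] at this; omega
  · have := habs 0 2; simp [abs_of_pos p0, abs_of_pos p2] at this; omega

private lemma ext_2413 (h0 : ∀ t, a t ≠ 0) (h : WordContainsPat a ![2,4,1,3]) :
    ∃ i0 i1 i2 i3 : Fin k, i0 < i1 ∧ i1 < i2 ∧ i2 < i3 ∧
      a i2 < a i0 ∧ a i0 < a i3 ∧ a i3 < a i1 := by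
  obtain ⟨idx, hm, hsgn, habs⟩ := h
  have p0 : 0 < a (idx 0) := by
    have := hsgn 0; simp at this; exact lt_of_le_of_ne (by omega) (Ne.symm (h0 _))
  have p1 : 0 < a (idx 1) := by
    have := hsgn 1; simp at this; exact lt_of_le_of_ne (by omega) (Ne.symm (h0 _))
  have p2 : 0 < a (idx 2) := by
    have := hsgn 2; simp at this; exact lt_of_le_of_ne (by omega) (Ne.symm (h0 _))
  have p3 : 0 < a (idx 3) := by
    have := hsgn 3; simp at this; exact lt_of_le_of_ne (by omega) (Ne.symm (h0 _))
  refine ⟨idx 0, idx 1, idx 2, idx 3, hm (by decide), hm (by decide), hm (by decide),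
    ?_, ?_, ?_⟩
  · have := habs 2 0; simp [abs_of_pos p2, abs_of_pos p0] at this; omega
  · have := habs 0 3; simp [abs_of_pos p0, abs_of_pos p3] at this; omega
  · have := habs 3 1; simp [abs_of_pos p3, abs_of_pos p1] at this; omega

private lemma ext_n3142 (h : WordContainsPat a ![-3,-1,-4,-2]) :
    ∃ i0 i1 i2 i3 : Fin k, i0 < i1 ∧ i1 < i2 ∧ i2 < i3 ∧
      a i2 < a i0 ∧ a i0 < a i3 ∧ a i3 < a i1 := by
  obtain ⟨idx, hm, hsgn, habs⟩ := h
  have n0 : a (idx 0) < 0 := by have := hsgn 0; simp at this; omega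
  have n1 : a (idx 1) < 0 := by have := hsgn 1; simp at this; omega
  have n2 : a (idx 2) < 0 := by have := hsgn 2; simp at this; omega
  have n3 : a (idx 3) < 0 := by have := hsgn 3; simp at this; omega
  refine ⟨idx 0, idx 1, idx 2, idx 3, hm (by decide), hm (by decide), hm (by decide),
    ?_, ?_, ?_⟩
  · have := habs 0 2; simp [abs_of_neg n0, abs_of_neg n2] at this; omega
  · have := habs 3 0; simp [abs_of_neg n3, abs_of_neg n0] at this; omega
  · have := habs 1 3; simp [abs_of_neg n1, abs_of_neg n3] at this; omega

private lemma ext_n2413 (h : WordContainsPat a ![-2,-4,-1,-3]) :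
    ∃ i0 i1 i2 i3 : Fin k, i0 < i1 ∧ i1 < i2 ∧ i2 < i3 ∧
      a i1 < a i3 ∧ a i3 < a i0 ∧ a i0 < a i2 := by
  obtain ⟨idx, hm, hsgn, habs⟩ := h
  have n0 : a (idx 0) < 0 := by have := hsgn 0; simp at this; omega
  have n1 : a (idx 1) < 0 := by have := hsgn 1; simp at this; omega
  have n2 : a (idx 2) < 0 := by have := hsgn 2; simp at this; omega
  have n3 : a (idx 3) < 0 := by have := hsgn 3; simp at this; omega
  refine ⟨idx 0, idx 1, idx 2, idx 3, hm (by decide), hm (by decide), hm (by decide),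
    ?_, ?_, ?_⟩
  · have := habs 3 1; simp [abs_of_neg n3, abs_of_neg n1] at this; omega
  · have := habs 0 3; simp [abs_of_neg n0, abs_of_neg n3] at this; omega
  · have := habs 2 0; simp [abs_of_neg n2, abs_of_neg n0] at this; omega

end SepHelpers

private lemma oneLine_ne_zero {n : ℕ} {w : Equiv.Perm ℤ} (hw : IsSignedPerm n w)
    (t : Fin n) : oneLine n w t ≠ 0 := by
  have hz : w 0 = 0 := by
    have := hw.1 0
    simp only [neg_zero] at this
    omega
  intro h
  have h2 : w ((t : ℤ) + 1) = w 0 := by rw [hz]; exact h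
  have h3 := w.injective h2
  have h4 : (0 : ℤ) ≤ (t : ℤ) := Int.natCast_nonneg _
  omega

/-- `w ∈ B_n` is separable iff `w` avoids the signed patterns `(-2)1` and
`2(-1)` and its standardization `st(w)` avoids `3142` and `2413`. -/
theorem separable_iff_st_separable (n : ℕ) (w : Equiv.Perm ℤ) (hw : IsSignedPerm n w) :
    SepSigned n w ↔
      (¬ WordContainsPat (oneLine n w) ![-2, 1] ∧ ¬ WordContainsPat (oneLine n w) ![2, -1]) ∧
        SepWordOrd (oneLine n w) := by
  set a := oneLine n w with ha
  have ha0 : ∀ t, a t ≠ 0 := fun t => oneLine_ne_zero hw t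
  constructor
  · rintro ⟨h1, h2, h3, h4, h5, h6⟩
    refine ⟨⟨h1, h2⟩, ?_, ?_⟩
    · intro hc
      obtain ⟨i0, i1, i2, i3, h01, h12, h23, c1, c2, c3⟩ := extSt_3142 hc
      rcases (ha0 i1).lt_or_gt with hn1 | hp1
      · rcases (ha0 i2).lt_or_gt with hn2 | hp2
        · exact h6 (mk_n2413 h01 h12 h23 hn2 c1 c2 c3)
        · rcases (ha0 i3).lt_or_gt with hn3 | hp3
          · by_cases hA : a i2 < -a i1
            · exact h1 (mk_n21 h12 hn1 hp2 hA)
            · by_cases hB : -a i3 < a i2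
              · exact h2 (mk_2n1 h23 hp2 hn3 hB)
              · omega
          · have hp0 : 0 < a i0 := lt_trans hp3 c2
            by_cases hA : -a i1 < a i0
            · exact h2 (mk_2n1 h01 hp0 hn1 hA)
            · by_cases hB : a i3 < -a i1
              · exact h1 (mk_n21 (lt_trans h12 h23) hn1 hp3 hB)
              · omega
      · exact h3 (mk_3142 h01 h12 h23 hp1 c1 c2 c3)
    · intro hc
      obtain ⟨i0, i1, i2, i3, h01, h12, h23, c1, c2, c3⟩ := extSt_2413 hc
      rcases (ha0 i2).lt_or_gt with hn2 | hp2
      · rcases (ha0 i1).lt_or_gt with hn1 | hp1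
        · exact h5 (mk_n3142 h01 h12 h23 hn1 c1 c2 c3)
        · rcases (ha0 i3).lt_or_gt with hn3 | hp3
          · have hn0 : a i0 < 0 := lt_trans c2 hn3
            by_cases hA : -a i3 < a i1
            · exact h2 (mk_2n1 (lt_trans h12 h23) hp1 hn3 hA)
            · by_cases hB : a i1 < -a i0
              · exact h1 (mk_n21 h01 hn0 hp1 hB)
              · omega
          · by_cases hA : -a i2 < a i1
            · exact h2 (mk_2n1 h12 hp1 hn2 hA)
            · by_cases hB : a i3 < -a i2
              · exact h1 (mk_n21 h23 hn2 hp3 hB)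
              · omega
      · exact h4 (mk_2413 h01 h12 h23 hp2 c1 c2 c3)
  · rintro ⟨⟨h1, h2⟩, h3, h4⟩
    refine ⟨h1, h2, ?_, ?_, ?_, ?_⟩
    · intro hc
      obtain ⟨i0, i1, i2, i3, h01, h12, h23, c1, c2, c3⟩ := ext_3142 ha0 hc
      exact h3 (mkSt_3142 h01 h12 h23 c1 c2 c3)
    · intro hc
      obtain ⟨i0, i1, i2, i3, h01, h12, h23, c1, c2, c3⟩ := ext_2413 ha0 hc
      exact h4 (mkSt_2413 h01 h12 h23 c1 c2 c3)
    · intro hc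
      obtain ⟨i0, i1, i2, i3, h01, h12, h23, c1, c2, c3⟩ := ext_n3142 hc
      exact h4 (mkSt_2413 h01 h12 h23 c1 c2 c3)
    · intro hc
      obtain ⟨i0, i1, i2, i3, h01, h12, h23, c1, c2, c3⟩ := ext_n2413 hc
      exact h3 (mkSt_3142 h01 h12 h23 c1 c2 c3)
end

section
/- Let w = w_1w_2⋯w_n ∈ B_n. Then w is minimal non-separable if and only if both of the following hold: (1) the prefix w_1w_2⋯w_{n-1} avoids the patterns (-2)1 and 2(-1), and w avoids the patterns 3142, 2413, (-3)(-1)(-4)(-2), and (-2)(-4)(-1)(-3); (2) there exists i∈[n-1] such that sts(w_i w_n) = (-2)1 if w_n>0 and sts(w_i w_n) = 2(-1) if w_n<0, and for all 1≤j<k<l<n one has sts(w_j w_k w_l w_n) ∉ {13(-4)2, 2(-3)41, (-1)3(-4)2, (-2)3(-4)1} if w_n>0, and sts(w_j w_k w_l w_n) ∉ {(-1)(-3)4(-2), (-2)3(-4)(-1), 1(-3)4(-2), 2(-3)4(-1)} if w_n<0. -/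
/-! ### Auxiliary machinery for `minNonSep_iff` -/

lemma mnsAbsLtIff (a b : ℤ) : |a| < |b| ↔ a.natAbs < b.natAbs := by
  rw [Int.abs_eq_natAbs, Int.abs_eq_natAbs]; exact_mod_cast Iff.rfl

lemma sts2_decode (x y p0 p1 : ℤ) :
    StsEqPat ![x, y] ![p0, p1] ↔
      ((x < 0 ↔ p0 < 0) ∧ (y < 0 ↔ p1 < 0) ∧
       (x.natAbs < y.natAbs ↔ p0.natAbs < p1.natAbs) ∧
       (y.natAbs < x.natAbs ↔ p1.natAbs < p0.natAbs)) := by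
  constructor
  · rintro ⟨h1, h2⟩
    refine ⟨h1 0, h1 1, ?_, ?_⟩
    · simpa [mnsAbsLtIff] using h2 0 1
    · simpa [mnsAbsLtIff] using h2 1 0
  · rintro ⟨h1, h2, h3, h4⟩
    refine ⟨fun t => ?_, fun s t => ?_⟩
    · fin_cases t <;> simpa
    · fin_cases s <;> fin_cases t <;> simp [mnsAbsLtIff] <;> omega

lemma sts4_decode (x y z u p0 p1 p2 p3 : ℤ) :
    StsEqPat ![x, y, z, u] ![p0, p1, p2, p3] ↔
      ((x < 0 ↔ p0 < 0) ∧ (y < 0 ↔ p1 < 0) ∧ (z < 0 ↔ p2 < 0) ∧ (u < 0 ↔ p3 < 0) ∧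
       (x.natAbs < y.natAbs ↔ p0.natAbs < p1.natAbs) ∧
       (y.natAbs < x.natAbs ↔ p1.natAbs < p0.natAbs) ∧
       (x.natAbs < z.natAbs ↔ p0.natAbs < p2.natAbs) ∧
       (z.natAbs < x.natAbs ↔ p2.natAbs < p0.natAbs) ∧
       (x.natAbs < u.natAbs ↔ p0.natAbs < p3.natAbs) ∧
       (u.natAbs < x.natAbs ↔ p3.natAbs < p0.natAbs) ∧
       (y.natAbs < z.natAbs ↔ p1.natAbs < p2.natAbs) ∧
       (z.natAbs < y.natAbs ↔ p2.natAbs < p1.natAbs) ∧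
       (y.natAbs < u.natAbs ↔ p1.natAbs < p3.natAbs) ∧
       (u.natAbs < y.natAbs ↔ p3.natAbs < p1.natAbs) ∧
       (z.natAbs < u.natAbs ↔ p2.natAbs < p3.natAbs) ∧
       (u.natAbs < z.natAbs ↔ p3.natAbs < p2.natAbs)) := by
  constructor
  · rintro ⟨h1, h2⟩
    refine ⟨h1 0, h1 1, h1 2, h1 3,
      ?_, ?_, ?_, ?_, ?_, ?_, ?_, ?_, ?_, ?_, ?_, ?_⟩
    · simpa [mnsAbsLtIff] using h2 0 1
    · simpa [mnsAbsLtIff] using h2 1 0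
    · simpa [mnsAbsLtIff] using h2 0 2
    · simpa [mnsAbsLtIff] using h2 2 0
    · simpa [mnsAbsLtIff] using h2 0 3
    · simpa [mnsAbsLtIff] using h2 3 0
    · simpa [mnsAbsLtIff] using h2 1 2
    · simpa [mnsAbsLtIff] using h2 2 1
    · simpa [mnsAbsLtIff] using h2 1 3
    · simpa [mnsAbsLtIff] using h2 3 1
    · simpa [mnsAbsLtIff] using h2 2 3
    · simpa [mnsAbsLtIff] using h2 3 2
  · rintro ⟨h1, h2, h3, h4, h5, h6, h7, h8, h9, h10, h11, h12, h13, h14, h15, h16⟩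
    constructor
    · simp only [Fin.forall_fin_succ, IsEmpty.forall_iff, Matrix.cons_val_zero,
        Matrix.cons_val_succ, and_true]
      exact ⟨h1, h2, h3, h4⟩
    · simp only [Fin.forall_fin_succ, IsEmpty.forall_iff, Matrix.cons_val_zero,
        Matrix.cons_val_succ, mnsAbsLtIff, and_true]
      refine ⟨⟨?_, h5, h7, h9⟩, ⟨h6, ?_, h11, h13⟩, ⟨h8, h12, ?_, h15⟩, h10, h14, h16, ?_⟩ <;>
        simp

lemma st4_decode (x y z u p0 p1 p2 p3 : ℤ) :
    StEqPat ![x, y, z, u] ![p0, p1, p2, p3] ↔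
      ((x < y ↔ p0 < p1) ∧ (y < x ↔ p1 < p0) ∧
       (x < z ↔ p0 < p2) ∧ (z < x ↔ p2 < p0) ∧
       (x < u ↔ p0 < p3) ∧ (u < x ↔ p3 < p0) ∧
       (y < z ↔ p1 < p2) ∧ (z < y ↔ p2 < p1) ∧
       (y < u ↔ p1 < p3) ∧ (u < y ↔ p3 < p1) ∧
       (z < u ↔ p2 < p3) ∧ (u < z ↔ p3 < p2)) := by
  simp only [StEqPat, Fin.forall_fin_succ, IsEmpty.forall_iff, Matrix.cons_val_zero,
    Matrix.cons_val_succ, and_true]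
  omega

lemma stsEqPat_congr {m : ℕ} {a b p : Fin m → ℤ} (h : ∀ t, a t = b t) :
    StsEqPat a p → StsEqPat b p := by
  rintro ⟨h1, h2⟩
  exact ⟨fun t => h t ▸ h1 t, fun s t => h s ▸ h t ▸ h2 s t⟩

lemma stEqPat_congr {m : ℕ} {a b p : Fin m → ℤ} (h : ∀ t, a t = b t) :
    StEqPat a p → StEqPat b p := by
  intro h2 s t; rw [← h s, ← h t]; exact h2 s t

lemma strictMono_vec2 {k : ℕ} {i j : Fin k} (h : i < j) : StrictMono ![i, j] := by
  intro s t hst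
  fin_cases s <;> fin_cases t <;> simp_all

lemma strictMono_vec4 {k : ℕ} {i j l r : Fin k} (h1 : i < j) (h2 : j < l) (h3 : l < r) :
    StrictMono ![i, j, l, r] := by
  intro s t hst
  fin_cases s <;> fin_cases t <;> simp_all <;> omega

lemma wcp2_iff {m : ℕ} {f : Fin m → ℤ} {g : ℤ → ℤ} {c : ℤ}
    (hf : ∀ t : Fin m, f t = g (c + (t : ℤ) + 1)) (p : Fin 2 → ℤ) :
    WordContainsPat f p ↔
      ∃ i j : ℤ, c + 1 ≤ i ∧ i < j ∧ j ≤ c + m ∧ StsEqPat ![g i, g j] p := by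
  constructor
  · rintro ⟨idx, hm, hp⟩
    have h01 : (idx 0 : ℕ) < (idx 1 : ℕ) := hm (show (0 : Fin 2) < 1 by decide)
    have hlt : ((idx 1 : ℕ) : ℕ) < m := (idx 1).isLt
    refine ⟨c + ((idx 0 : ℕ) : ℤ) + 1, c + ((idx 1 : ℕ) : ℤ) + 1, by omega, by omega, by omega, ?_⟩
    refine stsEqPat_congr (fun t => ?_) hp
    fin_cases t <;> simp [hf]
  · rintro ⟨i, j, hi, hij, hj, hp⟩
    have hia : (i - c - 1).toNat < m := by omega
    have hjb : (j - c - 1).toNat < m := by omega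
    refine ⟨![⟨(i - c - 1).toNat, hia⟩, ⟨(j - c - 1).toNat, hjb⟩],
      strictMono_vec2 (by rw [Fin.mk_lt_mk]; omega), stsEqPat_congr (fun t => ?_) hp⟩
    fin_cases t <;> simp [hf] <;> congr 1 <;> omega

lemma wcp4_iff {m : ℕ} {f : Fin m → ℤ} {g : ℤ → ℤ} {c : ℤ}
    (hf : ∀ t : Fin m, f t = g (c + (t : ℤ) + 1)) (p : Fin 4 → ℤ) :
    WordContainsPat f p ↔
      ∃ i j k l : ℤ, c + 1 ≤ i ∧ i < j ∧ j < k ∧ k < l ∧ l ≤ c + m ∧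
        StsEqPat ![g i, g j, g k, g l] p := by
  constructor
  · rintro ⟨idx, hm, hp⟩
    have h01 : (idx 0 : ℕ) < (idx 1 : ℕ) := hm (show (0 : Fin 4) < 1 by decide)
    have h12 : (idx 1 : ℕ) < (idx 2 : ℕ) := hm (show (1 : Fin 4) < 2 by decide)
    have h23 : (idx 2 : ℕ) < (idx 3 : ℕ) := hm (show (2 : Fin 4) < 3 by decide)
    have hlt : ((idx 3 : ℕ) : ℕ) < m := (idx 3).isLt
    refine ⟨c + ((idx 0 : ℕ) : ℤ) + 1, c + ((idx 1 : ℕ) : ℤ) + 1, c + ((idx 2 : ℕ) : ℤ) + 1,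
      c + ((idx 3 : ℕ) : ℤ) + 1, by omega, by omega, by omega, by omega, by omega, ?_⟩
    refine stsEqPat_congr (fun t => ?_) hp
    fin_cases t <;> simp [hf]
  · rintro ⟨i, j, k, l, hi, hij, hjk, hkl, hl, hp⟩
    have hia : (i - c - 1).toNat < m := by omega
    have hjb : (j - c - 1).toNat < m := by omega
    have hkc : (k - c - 1).toNat < m := by omega
    have hld : (l - c - 1).toNat < m := by omega
    refine ⟨![⟨(i - c - 1).toNat, hia⟩, ⟨(j - c - 1).toNat, hjb⟩, ⟨(k - c - 1).toNat, hkc⟩,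
        ⟨(l - c - 1).toNat, hld⟩],
      strictMono_vec4 (by rw [Fin.mk_lt_mk]; omega) (by rw [Fin.mk_lt_mk]; omega)
        (by rw [Fin.mk_lt_mk]; omega), stsEqPat_congr (fun t => ?_) hp⟩
    fin_cases t <;> simp [hf] <;> congr 1 <;> omega

lemma wcpSt4_iff {m : ℕ} {f : Fin m → ℤ} {g : ℤ → ℤ} {c : ℤ}
    (hf : ∀ t : Fin m, f t = g (c + (t : ℤ) + 1)) (p : Fin 4 → ℤ) :
    WordContainsStPat f p ↔
      ∃ i j k l : ℤ, c + 1 ≤ i ∧ i < j ∧ j < k ∧ k < l ∧ l ≤ c + m ∧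
        StEqPat ![g i, g j, g k, g l] p := by
  constructor
  · rintro ⟨idx, hm, hp⟩
    have h01 : (idx 0 : ℕ) < (idx 1 : ℕ) := hm (show (0 : Fin 4) < 1 by decide)
    have h12 : (idx 1 : ℕ) < (idx 2 : ℕ) := hm (show (1 : Fin 4) < 2 by decide)
    have h23 : (idx 2 : ℕ) < (idx 3 : ℕ) := hm (show (2 : Fin 4) < 3 by decide)
    have hlt : ((idx 3 : ℕ) : ℕ) < m := (idx 3).isLt
    refine ⟨c + ((idx 0 : ℕ) : ℤ) + 1, c + ((idx 1 : ℕ) : ℤ) + 1, c + ((idx 2 : ℕ) : ℤ) + 1,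
      c + ((idx 3 : ℕ) : ℤ) + 1, by omega, by omega, by omega, by omega, by omega, ?_⟩
    refine stEqPat_congr (fun t => ?_) hp
    fin_cases t <;> simp [hf]
  · rintro ⟨i, j, k, l, hi, hij, hjk, hkl, hl, hp⟩
    have hia : (i - c - 1).toNat < m := by omega
    have hjb : (j - c - 1).toNat < m := by omega
    have hkc : (k - c - 1).toNat < m := by omega
    have hld : (l - c - 1).toNat < m := by omega
    refine ⟨![⟨(i - c - 1).toNat, hia⟩, ⟨(j - c - 1).toNat, hjb⟩, ⟨(k - c - 1).toNat, hkc⟩,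
        ⟨(l - c - 1).toNat, hld⟩],
      strictMono_vec4 (by rw [Fin.mk_lt_mk]; omega) (by rw [Fin.mk_lt_mk]; omega)
        (by rw [Fin.mk_lt_mk]; omega), stEqPat_congr (fun t => ?_) hp⟩
    fin_cases t <;> simp [hf] <;> congr 1 <;> omega

lemma d_m21 (x y : ℤ) : StsEqPat ![x, y] ![-2, 1] ↔
    (x < 0 ∧ 0 ≤ y ∧ y.natAbs < x.natAbs) := by
  rw [sts2_decode]; norm_num; omega

lemma d_2m1 (x y : ℤ) : StsEqPat ![x, y] ![2, -1] ↔
    (0 ≤ x ∧ y < 0 ∧ y.natAbs < x.natAbs) := by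
  rw [sts2_decode]; norm_num; omega

lemma d_3142 (x y z u : ℤ) : StsEqPat ![x, y, z, u] ![3, 1, 4, 2] ↔
    (0 ≤ x ∧ 0 ≤ y ∧ 0 ≤ z ∧ 0 ≤ u ∧
      y.natAbs < u.natAbs ∧ u.natAbs < x.natAbs ∧ x.natAbs < z.natAbs) := by
  rw [sts4_decode]; norm_num; omega

lemma d_2413 (x y z u : ℤ) : StsEqPat ![x, y, z, u] ![2, 4, 1, 3] ↔
    (0 ≤ x ∧ 0 ≤ y ∧ 0 ≤ z ∧ 0 ≤ u ∧
      z.natAbs < x.natAbs ∧ x.natAbs < u.natAbs ∧ u.natAbs < y.natAbs) := by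
  rw [sts4_decode]; norm_num; omega

lemma d_m3142 (x y z u : ℤ) : StsEqPat ![x, y, z, u] ![-3, -1, -4, -2] ↔
    (x < 0 ∧ y < 0 ∧ z < 0 ∧ u < 0 ∧
      y.natAbs < u.natAbs ∧ u.natAbs < x.natAbs ∧ x.natAbs < z.natAbs) := by
  rw [sts4_decode]; norm_num; omega

lemma d_m2413 (x y z u : ℤ) : StsEqPat ![x, y, z, u] ![-2, -4, -1, -3] ↔
    (x < 0 ∧ y < 0 ∧ z < 0 ∧ u < 0 ∧
      z.natAbs < x.natAbs ∧ x.natAbs < u.natAbs ∧ u.natAbs < y.natAbs) := by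
  rw [sts4_decode]; norm_num; omega

lemma d_p1 (x y z u : ℤ) : StsEqPat ![x, y, z, u] ![1, 3, -4, 2] ↔
    (0 ≤ x ∧ 0 ≤ y ∧ z < 0 ∧ 0 ≤ u ∧
      x.natAbs < u.natAbs ∧ u.natAbs < y.natAbs ∧ y.natAbs < z.natAbs) := by
  rw [sts4_decode]; norm_num; omega

lemma d_p2 (x y z u : ℤ) : StsEqPat ![x, y, z, u] ![2, -3, 4, 1] ↔
    (0 ≤ x ∧ y < 0 ∧ 0 ≤ z ∧ 0 ≤ u ∧
      u.natAbs < x.natAbs ∧ x.natAbs < y.natAbs ∧ y.natAbs < z.natAbs) := by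
  rw [sts4_decode]; norm_num; omega

lemma d_p3 (x y z u : ℤ) : StsEqPat ![x, y, z, u] ![-1, 3, -4, 2] ↔
    (x < 0 ∧ 0 ≤ y ∧ z < 0 ∧ 0 ≤ u ∧
      x.natAbs < u.natAbs ∧ u.natAbs < y.natAbs ∧ y.natAbs < z.natAbs) := by
  rw [sts4_decode]; norm_num; omega

lemma d_p4 (x y z u : ℤ) : StsEqPat ![x, y, z, u] ![-2, 3, -4, 1] ↔
    (x < 0 ∧ 0 ≤ y ∧ z < 0 ∧ 0 ≤ u ∧
      u.natAbs < x.natAbs ∧ x.natAbs < y.natAbs ∧ y.natAbs < z.natAbs) := by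
  rw [sts4_decode]; norm_num; omega

lemma d_p5 (x y z u : ℤ) : StsEqPat ![x, y, z, u] ![-1, -3, 4, -2] ↔
    (x < 0 ∧ y < 0 ∧ 0 ≤ z ∧ u < 0 ∧
      x.natAbs < u.natAbs ∧ u.natAbs < y.natAbs ∧ y.natAbs < z.natAbs) := by
  rw [sts4_decode]; norm_num; omega

lemma d_p6 (x y z u : ℤ) : StsEqPat ![x, y, z, u] ![-2, 3, -4, -1] ↔
    (x < 0 ∧ 0 ≤ y ∧ z < 0 ∧ u < 0 ∧
      u.natAbs < x.natAbs ∧ x.natAbs < y.natAbs ∧ y.natAbs < z.natAbs) := by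
  rw [sts4_decode]; norm_num; omega

lemma d_p7 (x y z u : ℤ) : StsEqPat ![x, y, z, u] ![1, -3, 4, -2] ↔
    (0 ≤ x ∧ y < 0 ∧ 0 ≤ z ∧ u < 0 ∧
      x.natAbs < u.natAbs ∧ u.natAbs < y.natAbs ∧ y.natAbs < z.natAbs) := by
  rw [sts4_decode]; norm_num; omega

lemma d_p8 (x y z u : ℤ) : StsEqPat ![x, y, z, u] ![2, -3, 4, -1] ↔
    (0 ≤ x ∧ y < 0 ∧ 0 ≤ z ∧ u < 0 ∧
      u.natAbs < x.natAbs ∧ x.natAbs < y.natAbs ∧ y.natAbs < z.natAbs) := by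
  rw [sts4_decode]; norm_num; omega

lemma dst_3142 (x y z u : ℤ) : StEqPat ![x, y, z, u] ![3, 1, 4, 2] ↔
    (y < u ∧ u < x ∧ x < z) := by
  rw [st4_decode]; norm_num; omega

lemma dst_2413 (x y z u : ℤ) : StEqPat ![x, y, z, u] ![2, 4, 1, 3] ↔
    (z < x ∧ x < u ∧ u < y) := by
  rw [st4_decode]; norm_num; omega



set_option maxHeartbeats 3200000 in
theorem crux (N : ℤ) (v : ℤ → ℤ)
    (hnz : ∀ a : ℤ, 1 ≤ a → v a ≠ 0)
    (habs : ∀ a b : ℤ, 1 ≤ a → 1 ≤ b → a ≠ b → (v a).natAbs ≠ (v b).natAbs)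
    (Hpre : ∀ i j : ℤ, 1 ≤ i → i < j → j ≤ N - 1 →
      ¬(v i < 0 ∧ 0 ≤ v j ∧ (v j).natAbs < (v i).natAbs) ∧
      ¬(0 ≤ v i ∧ v j < 0 ∧ (v j).natAbs < (v i).natAbs))
    (H4 : ∀ a b c d : ℤ, 1 ≤ a → a < b → b < c → c < d → d ≤ N →
      ¬(0 ≤ v a ∧ 0 ≤ v b ∧ 0 ≤ v c ∧ 0 ≤ v d ∧
        (v b).natAbs < (v d).natAbs ∧ (v d).natAbs < (v a).natAbs ∧ (v a).natAbs < (v c).natAbs) ∧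
      ¬(0 ≤ v a ∧ 0 ≤ v b ∧ 0 ≤ v c ∧ 0 ≤ v d ∧
        (v c).natAbs < (v a).natAbs ∧ (v a).natAbs < (v d).natAbs ∧ (v d).natAbs < (v b).natAbs) ∧
      ¬(v a < 0 ∧ v b < 0 ∧ v c < 0 ∧ v d < 0 ∧
        (v b).natAbs < (v d).natAbs ∧ (v d).natAbs < (v a).natAbs ∧ (v a).natAbs < (v c).natAbs) ∧
      ¬(v a < 0 ∧ v b < 0 ∧ v c < 0 ∧ v d < 0 ∧
        (v c).natAbs < (v a).natAbs ∧ (v a).natAbs < (v d).natAbs ∧ (v d).natAbs < (v b).natAbs))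
    (HL : ∀ j k l : ℤ, 1 ≤ j → j < k → k < l → l < N →
      ¬(0 ≤ v j ∧ 0 ≤ v k ∧ v l < 0 ∧ 0 < v N ∧
        (v j).natAbs < (v N).natAbs ∧ (v N).natAbs < (v k).natAbs ∧ (v k).natAbs < (v l).natAbs) ∧
      ¬(0 ≤ v j ∧ v k < 0 ∧ 0 ≤ v l ∧ 0 < v N ∧
        (v N).natAbs < (v j).natAbs ∧ (v j).natAbs < (v k).natAbs ∧ (v k).natAbs < (v l).natAbs) ∧
      ¬(v j < 0 ∧ 0 ≤ v k ∧ v l < 0 ∧ 0 < v N ∧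
        (v j).natAbs < (v N).natAbs ∧ (v N).natAbs < (v k).natAbs ∧ (v k).natAbs < (v l).natAbs) ∧
      ¬(v j < 0 ∧ 0 ≤ v k ∧ v l < 0 ∧ 0 < v N ∧
        (v N).natAbs < (v j).natAbs ∧ (v j).natAbs < (v k).natAbs ∧ (v k).natAbs < (v l).natAbs) ∧
      ¬(v j < 0 ∧ v k < 0 ∧ 0 ≤ v l ∧ v N < 0 ∧
        (v j).natAbs < (v N).natAbs ∧ (v N).natAbs < (v k).natAbs ∧ (v k).natAbs < (v l).natAbs) ∧
      ¬(v j < 0 ∧ 0 ≤ v k ∧ v l < 0 ∧ v N < 0 ∧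
        (v N).natAbs < (v j).natAbs ∧ (v j).natAbs < (v k).natAbs ∧ (v k).natAbs < (v l).natAbs) ∧
      ¬(0 ≤ v j ∧ v k < 0 ∧ 0 ≤ v l ∧ v N < 0 ∧
        (v j).natAbs < (v N).natAbs ∧ (v N).natAbs < (v k).natAbs ∧ (v k).natAbs < (v l).natAbs) ∧
      ¬(0 ≤ v j ∧ v k < 0 ∧ 0 ≤ v l ∧ v N < 0 ∧
        (v N).natAbs < (v j).natAbs ∧ (v j).natAbs < (v k).natAbs ∧ (v k).natAbs < (v l).natAbs)) :
    ∀ a b c d : ℤ, 1 ≤ a → a < b → b < c → c < d → d ≤ N →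
      ¬(v b < v d ∧ v d < v a ∧ v a < v c) ∧ ¬(v c < v a ∧ v a < v d ∧ v d < v b) := by
  intro a b c d h1 h2 h3 h4 h5
  have nza := hnz a (by omega)
  have nzb := hnz b (by omega)
  have nzc := hnz c (by omega)
  have nzd := hnz d (by omega)
  have neab := habs a b (by omega) (by omega) (by omega)
  have neac := habs a c (by omega) (by omega) (by omega)
  have nead := habs a d (by omega) (by omega) (by omega)
  have nebc := habs b c (by omega) (by omega) (by omega)
  have nebd := habs b d (by omega) (by omega) (by omega)
  have necd := habs c d (by omega) (by omega) (by omega)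
  constructor
  · rintro ⟨o1, o2, o3⟩
    rcases nzb.lt_or_gt with hb | hb
    · -- v b < 0
      rcases nzd.lt_or_gt with hd | hd
      · -- v d < 0 too
        rcases nza.lt_or_gt with ha | ha
        · -- v a < 0
          rcases nzc.lt_or_gt with hc | hc
          · -- all negative
            exact (H4 a b c d h1 h2 h3 h4 h5).2.2.2 (by omega)
          · -- v c > 0 : negs = {a,b,d}
            have pbc := (Hpre b c (by omega) h3 (by omega)).1
            rcases lt_or_eq_of_le h5 with hdN | hdN
            · have pcd := (Hpre c d (by omega) h4 (by omega)).2
              omega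
            · subst hdN
              exact (HL a b c h1 h2 h3 (by omega)).2.2.2.2.1 (by omega)
        · -- 0 < v a : negs = {b,d}
          have pab := (Hpre a b (by omega) h2 (by omega)).2
          have pbc := (Hpre b c (by omega) h3 (by omega)).1
          rcases lt_or_eq_of_le h5 with hdN | hdN
          · have pcd := (Hpre c d (by omega) h4 (by omega)).2
            omega
          · subst hdN
            have L := HL a b c h1 h2 h3 (by omega)
            have L7 := L.2.2.2.2.2.2.1
            have L8 := L.2.2.2.2.2.2.2
            clear L
            omega
      · -- 0 < v d : negs = {b}
        have pab := (Hpre a b (by omega) h2 (by omega)).2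
        have pbc := (Hpre b c (by omega) h3 (by omega)).1
        rcases lt_or_eq_of_le h5 with hdN | hdN
        · have pbd := (Hpre b d (by omega) (by omega) (by omega)).1
          omega
        · subst hdN
          exact (HL a b c h1 h2 h3 (by omega)).2.1 (by omega)
    · -- 0 < v b : all positive
      exact (H4 a b c d h1 h2 h3 h4 h5).1 (by omega)
  · rintro ⟨o1, o2, o3⟩
    rcases nzc.lt_or_gt with hc | hc
    · -- v c < 0
      rcases nza.lt_or_gt with ha | ha
      · -- v a < 0
        rcases nzd.lt_or_gt with hd | hd
        · -- v d < 0
          rcases nzb.lt_or_gt with hbn | hbn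
          · -- all negative
            exact (H4 a b c d h1 h2 h3 h4 h5).2.2.1 (by omega)
          · -- 0 < v b : negs = {a,c,d}
            have pab := (Hpre a b (by omega) h2 (by omega)).1
            have pbc := (Hpre b c (by omega) h3 (by omega)).2
            rcases lt_or_eq_of_le h5 with hdN | hdN
            · have pbd := (Hpre b d (by omega) (by omega) (by omega)).2
              omega
            · subst hdN
              exact (HL a b c h1 h2 h3 (by omega)).2.2.2.2.2.1 (by omega)
        · -- 0 < v d : negs = {a,c}
          have pab := (Hpre a b (by omega) h2 (by omega)).1
          have pbc := (Hpre b c (by omega) h3 (by omega)).2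
          rcases lt_or_eq_of_le h5 with hdN | hdN
          · have pcd := (Hpre c d (by omega) h4 (by omega)).1
            omega
          · subst hdN
            have L := HL a b c h1 h2 h3 (by omega)
            have L3 := L.2.2.1
            have L4 := L.2.2.2.1
            clear L
            omega
      · -- 0 < v a : negs = {c}
        have pbc := (Hpre b c (by omega) h3 (by omega)).2
        rcases lt_or_eq_of_le h5 with hdN | hdN
        · have pcd := (Hpre c d (by omega) h4 (by omega)).1
          omega
        · subst hdN
          exact (HL a b c h1 h2 h3 (by omega)).1 (by omega)
    · -- 0 < v c : all positive
      exact (H4 a b c d h1 h2 h3 h4 h5).2.1 (by omega)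


set_option maxHeartbeats 4000000 in
/-- Characterization of minimal non-separable elements of `B_n`. -/
theorem minNonSep_iff (n : ℕ) (w : Equiv.Perm ℤ) (hw : IsSignedPerm n w) :
    MinNonSep n w ↔
      (((¬ WordContainsPat (fun t : Fin (n - 1) => w ((t : ℤ) + 1)) ![-2, 1]) ∧
        (¬ WordContainsPat (fun t : Fin (n - 1) => w ((t : ℤ) + 1)) ![2, -1])) ∧
       (¬ WordContainsPat (oneLine n w) ![3, 1, 4, 2]) ∧
       (¬ WordContainsPat (oneLine n w) ![2, 4, 1, 3]) ∧
       (¬ WordContainsPat (oneLine n w) ![-3, -1, -4, -2]) ∧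
       (¬ WordContainsPat (oneLine n w) ![-2, -4, -1, -3])) ∧
      ((∃ i : ℤ, 1 ≤ i ∧ i ≤ (n : ℤ) - 1 ∧
          (0 < w (n : ℤ) → StsEqPat ![w i, w (n : ℤ)] ![-2, 1]) ∧
          (w (n : ℤ) < 0 → StsEqPat ![w i, w (n : ℤ)] ![2, -1])) ∧
        ∀ j k l : ℤ, 1 ≤ j → j < k → k < l → l < (n : ℤ) →
          (0 < w (n : ℤ) →
            ¬ StsEqPat ![w j, w k, w l, w (n : ℤ)] ![1, 3, -4, 2] ∧
            ¬ StsEqPat ![w j, w k, w l, w (n : ℤ)] ![2, -3, 4, 1] ∧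
            ¬ StsEqPat ![w j, w k, w l, w (n : ℤ)] ![-1, 3, -4, 2] ∧
            ¬ StsEqPat ![w j, w k, w l, w (n : ℤ)] ![-2, 3, -4, 1]) ∧
          (w (n : ℤ) < 0 →
            ¬ StsEqPat ![w j, w k, w l, w (n : ℤ)] ![-1, -3, 4, -2] ∧
            ¬ StsEqPat ![w j, w k, w l, w (n : ℤ)] ![-2, 3, -4, -1] ∧
            ¬ StsEqPat ![w j, w k, w l, w (n : ℤ)] ![1, -3, 4, -2] ∧
            ¬ StsEqPat ![w j, w k, w l, w (n : ℤ)] ![2, -3, 4, -1])) := by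
  have h00 : w (0 : ℤ) = 0 := by
    have h := hw.1 0; rw [neg_zero] at h; omega
  have hnz : ∀ a : ℤ, 1 ≤ a → w a ≠ 0 := by
    intro a ha hza
    have h2 : w a = w 0 := by rw [hza, h00]
    have h3 := w.injective h2
    omega
  have habs : ∀ a b : ℤ, 1 ≤ a → 1 ≤ b → a ≠ b → (w a).natAbs ≠ (w b).natAbs := by
    intro a b ha hb hne heq
    rcases Int.natAbs_eq_natAbs_iff.mp heq with h | h
    · exact hne (w.injective h)
    · rw [← hw.1 b] at h
      have h3 := w.injective h
      omega
  constructor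
  · rintro ⟨hns, hall⟩
    obtain ⟨hpre, -⟩ := hall (n - 1) le_rfl
    obtain ⟨-, hsuf⟩ := hall 0 (Nat.zero_le _)
    obtain ⟨hp1, hp2, -, -, -, -⟩ := hpre
    obtain ⟨hs1, hs2⟩ := hsuf
    have Mo1 : ∀ a b c d : ℤ, 1 ≤ a → a < b → b < c → c < d → d ≤ (n : ℤ) →
        ¬(w b < w d ∧ w d < w a ∧ w a < w c) := by
      intro a b c d ha hab hbc hcd hd hcontra
      exact hs1 ((wcpSt4_iff (g := ⇑w) (c := 0) (fun t => by norm_num) _).mpr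
        ⟨a, b, c, d, by omega, hab, hbc, hcd, by omega, (dst_3142 _ _ _ _).mpr hcontra⟩)
    have Mo2 : ∀ a b c d : ℤ, 1 ≤ a → a < b → b < c → c < d → d ≤ (n : ℤ) →
        ¬(w c < w a ∧ w a < w d ∧ w d < w b) := by
      intro a b c d ha hab hbc hcd hd hcontra
      exact hs2 ((wcpSt4_iff (g := ⇑w) (c := 0) (fun t => by norm_num) _).mpr
        ⟨a, b, c, d, by omega, hab, hbc, hcd, by omega, (dst_2413 _ _ _ _).mpr hcontra⟩)
    have R2a : ¬ WordContainsPat (oneLine n w) ![3, 1, 4, 2] := by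
      intro hc
      obtain ⟨a, b, c, d, ha, hab, hbc, hcd, hd, hpat⟩ :=
        (wcp4_iff (g := ⇑w) (c := 0) (fun t => by simp [oneLine]) _).mp hc
      rw [d_3142] at hpat
      exact Mo1 a b c d (by omega) hab hbc hcd (by omega) (by omega)
    have R2b : ¬ WordContainsPat (oneLine n w) ![2, 4, 1, 3] := by
      intro hc
      obtain ⟨a, b, c, d, ha, hab, hbc, hcd, hd, hpat⟩ :=
        (wcp4_iff (g := ⇑w) (c := 0) (fun t => by simp [oneLine]) _).mp hc
      rw [d_2413] at hpat
      exact Mo2 a b c d (by omega) hab hbc hcd (by omega) (by omega)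
    have R2c : ¬ WordContainsPat (oneLine n w) ![-3, -1, -4, -2] := by
      intro hc
      obtain ⟨a, b, c, d, ha, hab, hbc, hcd, hd, hpat⟩ :=
        (wcp4_iff (g := ⇑w) (c := 0) (fun t => by simp [oneLine]) _).mp hc
      rw [d_m3142] at hpat
      exact Mo2 a b c d (by omega) hab hbc hcd (by omega) (by omega)
    have R2d : ¬ WordContainsPat (oneLine n w) ![-2, -4, -1, -3] := by
      intro hc
      obtain ⟨a, b, c, d, ha, hab, hbc, hcd, hd, hpat⟩ :=
        (wcp4_iff (g := ⇑w) (c := 0) (fun t => by simp [oneLine]) _).mp hc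
      rw [d_m2413] at hpat
      exact Mo1 a b c d (by omega) hab hbc hcd (by omega) (by omega)
    refine ⟨⟨⟨hp1, hp2⟩, R2a, R2b, R2c, R2d⟩, ?_, ?_⟩
    · have h6 : WordContainsPat (oneLine n w) ![-2, 1] ∨
          WordContainsPat (oneLine n w) ![2, -1] := by
        by_contra hcon
        push_neg at hcon
        exact hns ⟨hcon.1, hcon.2, R2a, R2b, R2c, R2d⟩
      rcases h6 with hc | hc
      · obtain ⟨p, q, hpp, hpq, hq, hpat⟩ :=
          (wcp2_iff (g := ⇑w) (c := 0) (fun t => by simp [oneLine]) _).mp hc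
        rw [d_m21] at hpat
        have hqn : q = (n : ℤ) ∨ q ≤ (n : ℤ) - 1 := by omega
        rcases hqn with h | h
        · subst h
          exact ⟨p, by omega, by omega, fun _ => (d_m21 _ _).mpr hpat,
            fun hneg => absurd hneg (by omega)⟩
        · exact absurd ((wcp2_iff (g := ⇑w) (c := 0) (fun t => by norm_num) _).mpr
            ⟨p, q, by omega, hpq, by omega, (d_m21 _ _).mpr hpat⟩) hp1
      · obtain ⟨p, q, hpp, hpq, hq, hpat⟩ :=
          (wcp2_iff (g := ⇑w) (c := 0) (fun t => by simp [oneLine]) _).mp hc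
        rw [d_2m1] at hpat
        have hqn : q = (n : ℤ) ∨ q ≤ (n : ℤ) - 1 := by omega
        rcases hqn with h | h
        · subst h
          exact ⟨p, by omega, by omega, fun hpos => absurd hpos (by omega),
            fun _ => (d_2m1 _ _).mpr hpat⟩
        · exact absurd ((wcp2_iff (g := ⇑w) (c := 0) (fun t => by norm_num) _).mpr
            ⟨p, q, by omega, hpq, by omega, (d_2m1 _ _).mpr hpat⟩) hp2
    · intro j k l hj hjk hkl hln
      constructor
      · intro hNpos
        refine ⟨?_, ?_, ?_, ?_⟩
        · intro hpat; rw [d_p1] at hpat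
          exact Mo2 j k l (n : ℤ) hj hjk hkl hln le_rfl (by omega)
        · intro hpat; rw [d_p2] at hpat
          exact Mo1 j k l (n : ℤ) hj hjk hkl hln le_rfl (by omega)
        · intro hpat; rw [d_p3] at hpat
          exact Mo2 j k l (n : ℤ) hj hjk hkl hln le_rfl (by omega)
        · intro hpat; rw [d_p4] at hpat
          exact Mo2 j k l (n : ℤ) hj hjk hkl hln le_rfl (by omega)
      · intro hNneg
        refine ⟨?_, ?_, ?_, ?_⟩
        · intro hpat; rw [d_p5] at hpat
          exact Mo1 j k l (n : ℤ) hj hjk hkl hln le_rfl (by omega)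
        · intro hpat; rw [d_p6] at hpat
          exact Mo2 j k l (n : ℤ) hj hjk hkl hln le_rfl (by omega)
        · intro hpat; rw [d_p7] at hpat
          exact Mo1 j k l (n : ℤ) hj hjk hkl hln le_rfl (by omega)
        · intro hpat; rw [d_p8] at hpat
          exact Mo1 j k l (n : ℤ) hj hjk hkl hln le_rfl (by omega)
  · rintro ⟨⟨⟨r1a, r1b⟩, r2a, r2b, r2c, r2d⟩, ⟨i0, hi01, hi0n, hi0pos, hi0neg⟩, r4⟩
    have hn2 : 2 ≤ n := by omega
    have Hpre : ∀ i j : ℤ, 1 ≤ i → i < j → j ≤ (n : ℤ) - 1 →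
        ¬(w i < 0 ∧ 0 ≤ w j ∧ (w j).natAbs < (w i).natAbs) ∧
        ¬(0 ≤ w i ∧ w j < 0 ∧ (w j).natAbs < (w i).natAbs) := by
      intro i j h1 h2 h3
      constructor
      · intro hcj
        exact r1a ((wcp2_iff (g := ⇑w) (c := 0) (fun t => by norm_num) _).mpr
          ⟨i, j, by omega, h2, by omega, (d_m21 _ _).mpr hcj⟩)
      · intro hcj
        exact r1b ((wcp2_iff (g := ⇑w) (c := 0) (fun t => by norm_num) _).mpr
          ⟨i, j, by omega, h2, by omega, (d_2m1 _ _).mpr hcj⟩)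
    have H4 : ∀ a b c d : ℤ, 1 ≤ a → a < b → b < c → c < d → d ≤ (n : ℤ) →
        ¬(0 ≤ w a ∧ 0 ≤ w b ∧ 0 ≤ w c ∧ 0 ≤ w d ∧
          (w b).natAbs < (w d).natAbs ∧ (w d).natAbs < (w a).natAbs ∧
          (w a).natAbs < (w c).natAbs) ∧
        ¬(0 ≤ w a ∧ 0 ≤ w b ∧ 0 ≤ w c ∧ 0 ≤ w d ∧
          (w c).natAbs < (w a).natAbs ∧ (w a).natAbs < (w d).natAbs ∧
          (w d).natAbs < (w b).natAbs) ∧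
        ¬(w a < 0 ∧ w b < 0 ∧ w c < 0 ∧ w d < 0 ∧
          (w b).natAbs < (w d).natAbs ∧ (w d).natAbs < (w a).natAbs ∧
          (w a).natAbs < (w c).natAbs) ∧
        ¬(w a < 0 ∧ w b < 0 ∧ w c < 0 ∧ w d < 0 ∧
          (w c).natAbs < (w a).natAbs ∧ (w a).natAbs < (w d).natAbs ∧
          (w d).natAbs < (w b).natAbs) := by
      intro a b c d h1 h2 h3 h4 h5
      refine ⟨?_, ?_, ?_, ?_⟩
      · intro hcj
        exact r2a ((wcp4_iff (g := ⇑w) (c := 0) (fun t => by simp [oneLine]) _).mpr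
          ⟨a, b, c, d, by omega, h2, h3, h4, by omega, (d_3142 _ _ _ _).mpr hcj⟩)
      · intro hcj
        exact r2b ((wcp4_iff (g := ⇑w) (c := 0) (fun t => by simp [oneLine]) _).mpr
          ⟨a, b, c, d, by omega, h2, h3, h4, by omega, (d_2413 _ _ _ _).mpr hcj⟩)
      · intro hcj
        exact r2c ((wcp4_iff (g := ⇑w) (c := 0) (fun t => by simp [oneLine]) _).mpr
          ⟨a, b, c, d, by omega, h2, h3, h4, by omega, (d_m3142 _ _ _ _).mpr hcj⟩)
      · intro hcj
        exact r2d ((wcp4_iff (g := ⇑w) (c := 0) (fun t => by simp [oneLine]) _).mpr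
          ⟨a, b, c, d, by omega, h2, h3, h4, by omega, (d_m2413 _ _ _ _).mpr hcj⟩)
    have HL : ∀ j k l : ℤ, 1 ≤ j → j < k → k < l → l < (n : ℤ) →
        ¬(0 ≤ w j ∧ 0 ≤ w k ∧ w l < 0 ∧ 0 < w (n : ℤ) ∧
          (w j).natAbs < (w (n : ℤ)).natAbs ∧ (w (n : ℤ)).natAbs < (w k).natAbs ∧
          (w k).natAbs < (w l).natAbs) ∧
        ¬(0 ≤ w j ∧ w k < 0 ∧ 0 ≤ w l ∧ 0 < w (n : ℤ) ∧
          (w (n : ℤ)).natAbs < (w j).natAbs ∧ (w j).natAbs < (w k).natAbs ∧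
          (w k).natAbs < (w l).natAbs) ∧
        ¬(w j < 0 ∧ 0 ≤ w k ∧ w l < 0 ∧ 0 < w (n : ℤ) ∧
          (w j).natAbs < (w (n : ℤ)).natAbs ∧ (w (n : ℤ)).natAbs < (w k).natAbs ∧
          (w k).natAbs < (w l).natAbs) ∧
        ¬(w j < 0 ∧ 0 ≤ w k ∧ w l < 0 ∧ 0 < w (n : ℤ) ∧
          (w (n : ℤ)).natAbs < (w j).natAbs ∧ (w j).natAbs < (w k).natAbs ∧
          (w k).natAbs < (w l).natAbs) ∧
        ¬(w j < 0 ∧ w k < 0 ∧ 0 ≤ w l ∧ w (n : ℤ) < 0 ∧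
          (w j).natAbs < (w (n : ℤ)).natAbs ∧ (w (n : ℤ)).natAbs < (w k).natAbs ∧
          (w k).natAbs < (w l).natAbs) ∧
        ¬(w j < 0 ∧ 0 ≤ w k ∧ w l < 0 ∧ w (n : ℤ) < 0 ∧
          (w (n : ℤ)).natAbs < (w j).natAbs ∧ (w j).natAbs < (w k).natAbs ∧
          (w k).natAbs < (w l).natAbs) ∧
        ¬(0 ≤ w j ∧ w k < 0 ∧ 0 ≤ w l ∧ w (n : ℤ) < 0 ∧
          (w j).natAbs < (w (n : ℤ)).natAbs ∧ (w (n : ℤ)).natAbs < (w k).natAbs ∧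
          (w k).natAbs < (w l).natAbs) ∧
        ¬(0 ≤ w j ∧ w k < 0 ∧ 0 ≤ w l ∧ w (n : ℤ) < 0 ∧
          (w (n : ℤ)).natAbs < (w j).natAbs ∧ (w j).natAbs < (w k).natAbs ∧
          (w k).natAbs < (w l).natAbs) := by
      intro j k l h1 h2 h3 h4
      have R := r4 j k l h1 h2 h3 h4
      refine ⟨?_, ?_, ?_, ?_, ?_, ?_, ?_, ?_⟩
      · intro hcj
        exact (R.1 hcj.2.2.2.1).1 ((d_p1 _ _ _ _).mpr (by omega))
      · intro hcj
        exact (R.1 hcj.2.2.2.1).2.1 ((d_p2 _ _ _ _).mpr (by omega))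
      · intro hcj
        exact (R.1 hcj.2.2.2.1).2.2.1 ((d_p3 _ _ _ _).mpr (by omega))
      · intro hcj
        exact (R.1 hcj.2.2.2.1).2.2.2 ((d_p4 _ _ _ _).mpr (by omega))
      · intro hcj
        exact (R.2 hcj.2.2.2.1).1 ((d_p5 _ _ _ _).mpr (by omega))
      · intro hcj
        exact (R.2 hcj.2.2.2.1).2.1 ((d_p6 _ _ _ _).mpr (by omega))
      · intro hcj
        exact (R.2 hcj.2.2.2.1).2.2.1 ((d_p7 _ _ _ _).mpr (by omega))
      · intro hcj
        exact (R.2 hcj.2.2.2.1).2.2.2 ((d_p8 _ _ _ _).mpr (by omega))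
    have CR := crux (n : ℤ) ⇑w hnz habs Hpre H4 HL
    constructor
    · intro hsep
      obtain ⟨s1, s2, -, -, -, -⟩ := hsep
      rcases (hnz (n : ℤ) (by omega)).lt_or_gt with hN | hN
      · exact s2 ((wcp2_iff (g := ⇑w) (c := 0) (fun t => by simp [oneLine]) _).mpr
          ⟨i0, (n : ℤ), by omega, by omega, by omega, hi0neg hN⟩)
      · exact s1 ((wcp2_iff (g := ⇑w) (c := 0) (fun t => by simp [oneLine]) _).mpr
          ⟨i0, (n : ℤ), by omega, by omega, by omega, hi0pos hN⟩)
    · intro i hi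
      constructor
      · refine ⟨?_, ?_, ?_, ?_, ?_, ?_⟩
        · intro hc
          obtain ⟨p, q, hp, hpq, hq, hpat⟩ :=
            (wcp2_iff (g := ⇑w) (c := 0) (fun t => by norm_num) _).mp hc
          exact r1a ((wcp2_iff (g := ⇑w) (c := 0) (fun t => by norm_num) _).mpr
            ⟨p, q, by omega, hpq, by omega, hpat⟩)
        · intro hc
          obtain ⟨p, q, hp, hpq, hq, hpat⟩ :=
            (wcp2_iff (g := ⇑w) (c := 0) (fun t => by norm_num) _).mp hc
          exact r1b ((wcp2_iff (g := ⇑w) (c := 0) (fun t => by norm_num) _).mpr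
            ⟨p, q, by omega, hpq, by omega, hpat⟩)
        · intro hc
          obtain ⟨a, b, c, d, ha, hab, hbc, hcd, hd, hpat⟩ :=
            (wcp4_iff (g := ⇑w) (c := 0) (fun t => by norm_num) _).mp hc
          exact r2a ((wcp4_iff (g := ⇑w) (c := 0) (fun t => by simp [oneLine]) _).mpr
            ⟨a, b, c, d, by omega, hab, hbc, hcd, by omega, hpat⟩)
        · intro hc
          obtain ⟨a, b, c, d, ha, hab, hbc, hcd, hd, hpat⟩ :=
            (wcp4_iff (g := ⇑w) (c := 0) (fun t => by norm_num) _).mp hc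
          exact r2b ((wcp4_iff (g := ⇑w) (c := 0) (fun t => by simp [oneLine]) _).mpr
            ⟨a, b, c, d, by omega, hab, hbc, hcd, by omega, hpat⟩)
        · intro hc
          obtain ⟨a, b, c, d, ha, hab, hbc, hcd, hd, hpat⟩ :=
            (wcp4_iff (g := ⇑w) (c := 0) (fun t => by norm_num) _).mp hc
          exact r2c ((wcp4_iff (g := ⇑w) (c := 0) (fun t => by simp [oneLine]) _).mpr
            ⟨a, b, c, d, by omega, hab, hbc, hcd, by omega, hpat⟩)
        · intro hc
          obtain ⟨a, b, c, d, ha, hab, hbc, hcd, hd, hpat⟩ :=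
            (wcp4_iff (g := ⇑w) (c := 0) (fun t => by norm_num) _).mp hc
          exact r2d ((wcp4_iff (g := ⇑w) (c := 0) (fun t => by simp [oneLine]) _).mpr
            ⟨a, b, c, d, by omega, hab, hbc, hcd, by omega, hpat⟩)
      · refine ⟨?_, ?_⟩
        · intro hc
          obtain ⟨a, b, c, d, ha, hab, hbc, hcd, hd, hst⟩ :=
            (wcpSt4_iff (g := ⇑w) (c := (i : ℤ)) (fun t => rfl) _).mp hc
          rw [dst_3142] at hst
          exact (CR a b c d (by omega) hab hbc hcd (by omega)).1 hst
        · intro hc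
          obtain ⟨a, b, c, d, ha, hab, hbc, hcd, hd, hst⟩ :=
            (wcpSt4_iff (g := ⇑w) (c := (i : ℤ)) (fun t => rfl) _).mp hc
          rw [dst_2413] at hst
          exact (CR a b c d (by omega) hab hbc hcd (by omega)).2 hst
end

section
/- Let w ∈ B_n and let w₀ ∈ B_n be the longest element, i.e. w₀(i) = -i for all i. If w is non-separable, then w₀w and ww₀ are non-separable; if w is minimal non-separable, then w₀w and ww₀ are minimal non-separable. -/
lemma wordContainsPat_neg {k m : ℕ} (a : Fin k → ℤ) (ha : ∀ t, a t ≠ 0)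
    (p q : Fin m → ℤ) (hp : ∀ t, p t ≠ 0) (hpq : ∀ t, q t = -p t) :
    WordContainsPat (fun t => -(a t)) p ↔ WordContainsPat a q := by
  constructor
  · rintro ⟨idx, hmono, h1, h2⟩
    refine ⟨idx, hmono, fun t => ?_, fun s t => ?_⟩
    · have h3 := h1 t; have h4 := ha (idx t); have h5 := hp t
      simp only [Function.comp_apply, hpq] at *
      omega
    · have h3 := h2 s t
      simp only [Function.comp_apply, hpq, abs_neg] at *
      exact h3
  · rintro ⟨idx, hmono, h1, h2⟩
    refine ⟨idx, hmono, fun t => ?_, fun s t => ?_⟩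
    · have h3 := h1 t; have h4 := ha (idx t); have h5 := hp t
      simp only [Function.comp_apply, hpq] at *
      omega
    · have h3 := h2 s t
      simp only [Function.comp_apply, hpq, abs_neg] at *
      exact h3

lemma wordContainsStPat_neg {k m : ℕ} (a : Fin k → ℤ) (p q : Fin m → ℤ)
    (hpq : ∀ s t, p s < p t ↔ q t < q s) :
    WordContainsStPat (fun t => -(a t)) p ↔ WordContainsStPat a q := by
  constructor
  · rintro ⟨idx, hmono, h⟩
    refine ⟨idx, hmono, fun s t => ?_⟩
    have h1 := h t s
    have h2 := hpq t s
    simp only [Function.comp_apply] at *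
    omega
  · rintro ⟨idx, hmono, h⟩
    refine ⟨idx, hmono, fun s t => ?_⟩
    have h1 := h t s
    have h2 := hpq s t
    simp only [Function.comp_apply] at *
    omega

lemma sepWordSigned_neg {k : ℕ} (a : Fin k → ℤ) (ha : ∀ t, a t ≠ 0) :
    SepWordSigned (fun t => -(a t)) ↔ SepWordSigned a := by
  unfold SepWordSigned
  rw [wordContainsPat_neg a ha ![-2, 1] ![2, -1] (by decide) (by decide),
      wordContainsPat_neg a ha ![2, -1] ![-2, 1] (by decide) (by decide),
      wordContainsPat_neg a ha ![3, 1, 4, 2] ![-3, -1, -4, -2] (by decide) (by decide),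
      wordContainsPat_neg a ha ![2, 4, 1, 3] ![-2, -4, -1, -3] (by decide) (by decide),
      wordContainsPat_neg a ha ![-3, -1, -4, -2] ![3, 1, 4, 2] (by decide) (by decide),
      wordContainsPat_neg a ha ![-2, -4, -1, -3] ![2, 4, 1, 3] (by decide) (by decide)]
  tauto

lemma sepWordOrd_neg {k : ℕ} (a : Fin k → ℤ) :
    SepWordOrd (fun t => -(a t)) ↔ SepWordOrd a := by
  unfold SepWordOrd
  rw [wordContainsStPat_neg a ![3, 1, 4, 2] ![2, 4, 1, 3] (by decide),
      wordContainsStPat_neg a ![2, 4, 1, 3] ![3, 1, 4, 2] (by decide)]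
  tauto

/-- Multiplying by the longest element `w₀` (which sends `i ↦ -i`)
preserves non-separability and minimal non-separability. -/
theorem w0_mul_nonSep (n : ℕ) (w w₀ : Equiv.Perm ℤ)
    (hw : IsSignedPerm n w)
    (hw₀ : ∀ i : ℤ, (|i| ≤ (n : ℤ) → w₀ i = -i) ∧ ((n : ℤ) < |i| → w₀ i = i)) :
    (¬ SepSigned n w → ¬ SepSigned n (w₀ * w) ∧ ¬ SepSigned n (w * w₀)) ∧
    (MinNonSep n w → MinNonSep n (w₀ * w) ∧ MinNonSep n (w * w₀)) := by
  obtain ⟨hw1, hw2⟩ := hw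
  have hw0 : w 0 = 0 := by
    have h := hw1 0
    simp only [neg_zero] at h
    omega
  have hwnz : ∀ j : ℤ, j ≠ 0 → w j ≠ 0 := by
    intro j hj h
    exact hj (w.injective (h.trans hw0.symm))
  have hwb : ∀ j : ℤ, |j| ≤ (n : ℤ) → |w j| ≤ (n : ℤ) := by
    intro j hj
    by_contra h
    push_neg at h
    have h2 := hw2 (w j) h
    have h3 := w.injective h2
    rw [h3] at h
    omega
  have hkeyL : ∀ j : ℤ, 1 ≤ j → j ≤ (n : ℤ) → (w₀ * w) j = -(w j) := by
    intro j h1 h2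
    have hb : |w j| ≤ (n : ℤ) := hwb j (by rw [abs_of_pos (by omega)]; omega)
    simpa [Equiv.Perm.mul_apply] using (hw₀ (w j)).1 hb
  have hkeyR : ∀ j : ℤ, 1 ≤ j → j ≤ (n : ℤ) → (w * w₀) j = -(w j) := by
    intro j h1 h2
    have hz : w₀ j = -j := (hw₀ j).1 (by rw [abs_of_pos (by omega)]; omega)
    simp [Equiv.Perm.mul_apply, hz, hw1 j]
  have main : ∀ w' : Equiv.Perm ℤ, (∀ j : ℤ, 1 ≤ j → j ≤ (n : ℤ) → w' j = -(w j)) →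
      (¬ SepSigned n w → ¬ SepSigned n w') ∧ (MinNonSep n w → MinNonSep n w') := by
    intro w' hneg
    have hsep : SepSigned n w' ↔ SepSigned n w := by
      unfold SepSigned oneLine
      have hone : (fun t : Fin n => w' ((t : ℤ) + 1)) =
          fun t : Fin n => -(w ((t : ℤ) + 1)) := by
        funext t
        have ht := t.isLt
        exact hneg _ (by omega) (by omega)
      rw [hone]
      exact sepWordSigned_neg _ (fun t => hwnz _ (by omega))
    constructor
    · intro h hs
      exact h (hsep.mp hs)
    · rintro ⟨hns, hmin⟩
      refine ⟨fun hs => hns (hsep.mp hs), fun i hi => ?_⟩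
      obtain ⟨hm1, hm2⟩ := hmin i hi
      constructor
      · have hone : (fun t : Fin i => w' ((t : ℤ) + 1)) =
            fun t : Fin i => -(w ((t : ℤ) + 1)) := by
          funext t
          have ht := t.isLt
          exact hneg _ (by omega) (by omega)
        rw [hone]
        exact (sepWordSigned_neg _ (fun t => hwnz _ (by omega))).mpr hm1
      · have hone : (fun t : Fin (n - i) => w' ((i : ℤ) + (t : ℤ) + 1)) =
            fun t : Fin (n - i) => -(w ((i : ℤ) + (t : ℤ) + 1)) := by
          funext t
          have ht := t.isLt
          exact hneg _ (by omega) (by omega)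
        rw [hone]
        exact (sepWordOrd_neg _).mpr hm2
  have mL := main (w₀ * w) hkeyL
  have mR := main (w * w₀) hkeyR
  exact ⟨fun h => ⟨mL.1 h, mR.1 h⟩, fun h => ⟨mL.2 h, mR.2 h⟩⟩
end

section
/- Let w = w_1w_2⋯w_n ∈ B_n. If w and w^{-1} are both minimal non-separable, then |w_n| = n-1 or |w_{n-1}| = n. -/
lemma contains_two {k : ℕ} (a : Fin k → ℤ) (s t : Fin k) (hst : s < t) (p : Fin 2 → ℤ)
    (h0 : a s < 0 ↔ p 0 < 0) (h1 : a t < 0 ↔ p 1 < 0)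
    (h01 : |a s| < |a t| ↔ |p 0| < |p 1|) (h10 : |a t| < |a s| ↔ |p 1| < |p 0|) :
    WordContainsPat a p := by
  refine ⟨![s, t], ?_, ?_, ?_⟩
  · intro u v huv
    fin_cases u <;> fin_cases v <;>
      first | exact absurd huv (by decide) | simpa using hst
  · intro u
    fin_cases u <;> simpa using ‹_›
  · intro u v
    fin_cases u <;> fin_cases v <;> simp [h01, h10]

lemma pos_transfer {k : ℕ} (a : Fin k → ℤ) (ha : ∀ t, a t ≠ 0) (p : Fin 4 → ℤ)
    (hp : ∀ t, 0 < p t) (hc : WordContainsPat a p) : WordContainsStPat a p := by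
  obtain ⟨idx, hm, hsgn, habs⟩ := hc
  simp only [Function.comp_apply] at hsgn habs
  have hpos : ∀ u, 0 < a (idx u) := by
    intro u
    have h1 := hsgn u
    have h2 := hp u
    have h3 := ha (idx u)
    omega
  refine ⟨idx, hm, fun s t => ?_⟩
  simp only [Function.comp_apply]
  calc a (idx s) < a (idx t) ↔ |a (idx s)| < |a (idx t)| := by
        rw [abs_of_pos (hpos s), abs_of_pos (hpos t)]
    _ ↔ |p s| < |p t| := habs s t
    _ ↔ p s < p t := by rw [abs_of_pos (hp s), abs_of_pos (hp t)]

lemma neg_transfer {k : ℕ} (a : Fin k → ℤ) (p q : Fin 4 → ℤ)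
    (hp : ∀ t, p t < 0) (hq : ∀ s t : Fin 4, (|p t| < |p s| ↔ q s < q t))
    (hc : WordContainsPat a p) : WordContainsStPat a q := by
  obtain ⟨idx, hm, hsgn, habs⟩ := hc
  simp only [Function.comp_apply] at hsgn habs
  have hneg : ∀ u, a (idx u) < 0 := fun u => (hsgn u).mpr (hp u)
  refine ⟨idx, hm, fun s t => ?_⟩
  simp only [Function.comp_apply]
  calc a (idx s) < a (idx t) ↔ |a (idx t)| < |a (idx s)| := by
        rw [abs_of_neg (hneg s), abs_of_neg (hneg t)]; omega
    _ ↔ |p t| < |p s| := habs t s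
    _ ↔ q s < q t := hq s t

lemma exists_occ {k : ℕ} (a : Fin k → ℤ) (hns : ¬ SepWordSigned a)
    (hord : SepWordOrd a) (ha : ∀ t, a t ≠ 0) :
    ∃ s t : Fin k, s < t ∧ a s * a t < 0 ∧ |a t| < |a s| := by
  simp only [SepWordSigned, not_and_or, not_not] at hns
  rcases hns with h | h | h | h | h | h
  · obtain ⟨idx, hm, hsgn, habs⟩ := h
    simp only [Function.comp_apply] at hsgn habs
    refine ⟨idx 0, idx 1, hm (by decide), ?_, ?_⟩
    · have h0 : a (idx 0) < 0 := (hsgn 0).mpr (by norm_num)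
      have h1 : 0 < a (idx 1) := by
        have h := hsgn 1
        norm_num at h
        have := ha (idx 1); omega
      exact mul_neg_of_neg_of_pos h0 h1
    · have := (habs 1 0).mpr (by norm_num)
      exact this
  · obtain ⟨idx, hm, hsgn, habs⟩ := h
    simp only [Function.comp_apply] at hsgn habs
    refine ⟨idx 0, idx 1, hm (by decide), ?_, ?_⟩
    · have h1 : a (idx 1) < 0 := (hsgn 1).mpr (by norm_num)
      have h0 : 0 < a (idx 0) := by
        have h := hsgn 0
        norm_num at h
        have := ha (idx 0); omega
      exact mul_neg_of_pos_of_neg h0 h1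
    · exact (habs 1 0).mpr (by norm_num)
  · exact absurd (pos_transfer a ha _ (by decide) h) hord.1
  · exact absurd (pos_transfer a ha _ (by decide) h) hord.2
  · exact absurd (neg_transfer a _ ![2,4,1,3] (by decide) (by decide) h) hord.2
  · exact absurd (neg_transfer a _ ![3,1,4,2] (by decide) (by decide) h) hord.1

lemma occ_pattern (w : Equiv.Perm ℤ) (L : ℕ) (i j : ℤ)
    (h1 : 1 ≤ i) (hij : i < j) (hj : j ≤ (L : ℤ))
    (hs : w i * w j < 0) (ha : |w j| < |w i|) :
    ¬ SepWordSigned (fun t : Fin L => w ((t : ℤ) + 1)) := by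
  intro hsep
  have hiL : (i - 1).toNat < L := by omega
  have hjL : (j - 1).toNat < L := by omega
  set s : Fin L := ⟨(i - 1).toNat, hiL⟩
  set t : Fin L := ⟨(j - 1).toNat, hjL⟩
  have has : ((s : ℤ) + 1) = i := by simp only [s]; omega
  have hat : ((t : ℤ) + 1) = j := by simp only [t]; omega
  have hst : s < t := by simp only [s, t, Fin.mk_lt_mk]; omega
  rcases lt_trichotomy (w i) 0 with hneg | hzero | hpos
  · have hwj : 0 < w j := by nlinarith
    exact hsep.1 (contains_two _ s t hst ![-2, 1]
      (by rw [has]; norm_num [hneg])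
      (by rw [hat]; norm_num; omega)
      (by rw [has, hat]; norm_num; omega)
      (by rw [has, hat]; norm_num; omega))
  · rw [hzero] at hs; simp at hs
  · have hwj : w j < 0 := by nlinarith
    exact hsep.2.1 (contains_two _ s t hst ![2, -1]
      (by rw [has]; norm_num; omega)
      (by rw [hat]; norm_num [hwj])
      (by rw [has, hat]; norm_num; omega)
      (by rw [has, hat]; norm_num; omega))

lemma sign3 {x y z : ℤ} (h1 : x * z < 0) (h2 : 0 < y * z) : x * y < 0 := by
  rw [mul_neg_iff] at h1 ⊢
  rw [mul_pos_iff] at h2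
  rcases h1 with ⟨hx, hz⟩ | ⟨hx, hz⟩ <;> rcases h2 with ⟨hy, hz'⟩ | ⟨hy, hz'⟩ <;> omega

/-- If `w` and `w⁻¹` are both minimal non-separable,
then `|w_n| = n-1` or `|w_{n-1}| = n`. -/

theorem minNonSep_last_entries (n : ℕ) (w : Equiv.Perm ℤ) (hw : IsSignedPerm n w)
    (h1 : MinNonSep n w) (h2 : MinNonSep n w⁻¹) :
    |w (n : ℤ)| = (n : ℤ) - 1 ∨ |w ((n : ℤ) - 1)| = (n : ℤ) := by
  -- basic consequences of being a signed permutation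
  have hw0 : w 0 = 0 := by
    have h := hw.1 0
    simp only [neg_zero] at h
    omega
  have hne : ∀ t : ℤ, t ≠ 0 → w t ≠ 0 := by
    intro t ht h
    exact ht (w.injective (h.trans hw0.symm))
  have habs_le : ∀ t : ℤ, |t| ≤ (n : ℤ) → |w t| ≤ (n : ℤ) := by
    intro t ht
    by_contra h
    push_neg at h
    have h2' := hw.2 (w t) h
    have h3 : w t = t := w.injective h2'
    rw [h3] at h
    omega
  have habs_inj : ∀ s t : ℤ, 1 ≤ s → 1 ≤ t → |w s| = |w t| → s = t := by
    intro s t hs ht h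
    rcases abs_eq_abs.mp h with h' | h'
    · exact w.injective h'
    · have : w s = w (-t) := by rw [hw.1]; exact h'
      have := w.injective this
      omega
  have hinv_anti : ∀ x : ℤ, w⁻¹ (-x) = -(w⁻¹ x) := by
    intro x
    apply w.injective
    rw [hw.1]; simp
  -- the master lemma: every occurrence of (-2)1 or 2(-1) in w sits at (i,n) with |w i| = n
  have master : ∀ i j : ℤ, 1 ≤ i → i < j → j ≤ (n : ℤ) → w i * w j < 0 → |w j| < |w i| →
      j = (n : ℤ) ∧ |w i| = (n : ℤ) := by
    intro i j hi hij hj hs ha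
    have hsepw : SepWordSigned (fun t : Fin (n-1) => w ((t : ℤ) + 1)) :=
      (h1.2 (n-1) le_rfl).1
    have hsepw' : SepWordSigned (fun t : Fin (n-1) => w⁻¹ ((t : ℤ) + 1)) :=
      (h2.2 (n-1) le_rfl).1
    have hjn : j = (n : ℤ) := by
      by_contra hne'
      exact occ_pattern w (n-1) i j hi hij (by omega) hs ha hsepw
    refine ⟨hjn, ?_⟩
    by_contra hpn
    have hwile : |w i| ≤ (n : ℤ) := habs_le i (by rw [abs_of_nonneg] <;> omega)
    have hwj0 : w j ≠ 0 := fun h => by rw [h] at hs; simp at hs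
    have hwi0 : w i ≠ 0 := fun h => by rw [h] at hs; simp at hs
    rcases lt_trichotomy (w i) 0 with hneg | hzero | hpos
    · have hwj : 0 < w j := by nlinarith
      -- p = |w i| = -(w i), q = |w j| = w j
      have hp : w⁻¹ (-(w i)) = -i := by rw [hinv_anti]; simp
      have hq : w⁻¹ (w j) = j := Equiv.Perm.inv_eq_iff_eq.mpr rfl
      refine occ_pattern w⁻¹ (n-1) (w j) (-(w i)) (by omega) (by
          rw [abs_of_neg hneg, abs_of_pos hwj] at ha; omega)
        (by rw [abs_of_neg hneg] at hwile hpn; omega) ?_ ?_ hsepw'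
      · rw [hp, hq, mul_neg]
        have : 0 < j * i := mul_pos (by omega) (by omega)
        linarith
      · rw [hp, hq]
        rw [abs_of_pos (by omega : (0:ℤ) < j), abs_of_neg (by omega : -i < 0)]
        omega
    · exact absurd hzero hwi0
    · have hwj : w j < 0 := by nlinarith
      have hp : w⁻¹ (w i) = i := Equiv.Perm.inv_eq_iff_eq.mpr rfl
      have hq : w⁻¹ (-(w j)) = -j := by rw [hinv_anti]; simp
      refine occ_pattern w⁻¹ (n-1) (-(w j)) (w i) (by omega) (by
          rw [abs_of_pos hpos, abs_of_neg hwj] at ha; omega)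
        (by rw [abs_of_pos hpos] at hwile hpn; omega) ?_ ?_ hsepw'
      · rw [hp, hq, neg_mul]
        have : 0 < j * i := mul_pos (by omega) (by omega)
        linarith
      · rw [hp, hq]
        rw [abs_of_pos (by omega : (0:ℤ) < i), abs_of_neg (by omega : -j < 0)]
        omega
  -- existence of an occurrence
  have hfull : ¬ SepWordSigned (oneLine n w) := h1.1
  have hordfull : SepWordOrd (oneLine n w) := by
    have h := (h1.2 0 (Nat.zero_le _)).2
    have he : (fun t : Fin (n - 0) => w (((0:ℕ) : ℤ) + (t : ℤ) + 1)) = oneLine n w := by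
      funext t
      simp [oneLine]
    rwa [he] at h
  have hnonzero : ∀ t : Fin n, oneLine n w t ≠ 0 := by
    intro t
    apply hne
    have : (0:ℤ) ≤ (t : ℤ) := Int.ofNat_nonneg _
    omega
  obtain ⟨s, t, hst, hprod, habs'⟩ := exists_occ (oneLine n w) hfull hordfull hnonzero
  have hsval : oneLine n w s = w ((s : ℤ) + 1) := rfl
  have htval : oneLine n w t = w ((t : ℤ) + 1) := rfl
  rw [hsval, htval] at hprod habs'
  set i : ℤ := (s : ℤ) + 1 with hidef
  set j : ℤ := (t : ℤ) + 1 with hjdef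
  have hi1 : 1 ≤ i := by have : (0:ℤ) ≤ (s : ℤ) := Int.ofNat_nonneg _; omega
  have hij : i < j := by
    have : (s : ℕ) < (t : ℕ) := hst
    omega
  have hjn' : j ≤ (n : ℤ) := by
    have : (t : ℕ) < n := t.isLt
    omega
  obtain ⟨hjn, hwin⟩ := master i j hi1 hij hjn' hprod habs'
  -- now i < n, |w i| = n, |w n| < n
  rw [hjn] at hprod habs' hij
  -- case i = n - 1
  by_cases hi2 : i = (n : ℤ) - 1
  · right
    rw [← hi2]
    exact hwin
  -- case |w n| = n - 1
  by_cases hm2 : |w (n : ℤ)| = (n : ℤ) - 1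
  · left
    exact hm2
  -- remaining: derive a contradiction
  exfalso
  have hwn0 : w (n : ℤ) ≠ 0 := hne _ (by omega)
  have hm1 : 1 ≤ |w (n : ℤ)| := by
    rcases abs_pos.mpr hwn0 with h
    omega
  have hmle : |w (n : ℤ)| ≤ (n : ℤ) - 2 := by
    rw [hwin] at habs'
    omega
  have hn3 : 3 ≤ (n : ℤ) := by omega
  have hile : i ≤ (n : ℤ) - 2 := by omega
  -- find k with |w k| = n - 1
  obtain ⟨k, hk1, hkn, hwk⟩ : ∃ k : ℤ, 1 ≤ k ∧ k ≤ (n : ℤ) ∧ |w k| = (n : ℤ) - 1 := by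
    set x := w⁻¹ ((n : ℤ) - 1) with hx
    have hwx : w x = (n : ℤ) - 1 := (Equiv.eq_symm_apply w).mp rfl
    have hx0 : x ≠ 0 := by
      intro h
      rw [h, hw0] at hwx
      omega
    have hxle : |x| ≤ (n : ℤ) := by
      by_contra hcon
      push_neg at hcon
      have heq := hw.2 x hcon
      rw [heq] at hwx
      rw [hwx] at hcon
      rw [abs_of_nonneg (by omega)] at hcon
      omega
    rcases lt_trichotomy x 0 with h | h | h
    · refine ⟨-x, by omega, by rw [abs_of_neg h] at hxle; omega, ?_⟩
      rw [hw.1, hwx]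
      rw [abs_of_neg (by omega : -((n:ℤ)-1) < 0)]
      omega
    · exact absurd h hx0
    · refine ⟨x, by omega, by rw [abs_of_pos h] at hxle; omega, ?_⟩
      rw [hwx]
      rw [abs_of_pos (by omega : (0:ℤ) < (n:ℤ)-1)]
  have hkne_n : k ≠ (n : ℤ) := by
    intro h
    rw [h] at hwk
    exact hm2 hwk
  have hkne_i : k ≠ i := by
    intro h
    rw [h, hwin] at hwk
    omega
  have hwk0 : w k ≠ 0 := hne _ (by omega)
  -- step 1 : w k * w n > 0
  have hkn_pos : 0 < w k * w (n : ℤ) := by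
    rcases (mul_ne_zero hwk0 hwn0).lt_or_gt with h | h
    · exfalso
      obtain ⟨-, h2'⟩ := master k (n : ℤ) hk1 (by omega) le_rfl h (by rw [hwk]; omega)
      rw [hwk] at h2'
      omega
    · exact h
  -- step 2 : w i * w k < 0
  have hik_neg : w i * w k < 0 := sign3 hprod hkn_pos
  -- step 3 : k < i
  have hki : k < i := by
    rcases lt_trichotomy k i with h | h | h
    · exact h
    · exact absurd h hkne_i
    · exfalso
      obtain ⟨h1', -⟩ := master i k hi1 h hkn hik_neg (by rw [hwk, hwin]; omega)
      omega
  -- position n-1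
  have hc0 : w ((n : ℤ) - 1) ≠ 0 := hne _ (by omega)
  have hcle : |w ((n : ℤ) - 1)| ≤ (n : ℤ) :=
    habs_le _ (by rw [abs_of_pos (by omega : (0:ℤ) < (n:ℤ)-1)]; omega)
  have hcne_n : |w ((n : ℤ) - 1)| ≠ (n : ℤ) := by
    intro h
    have := habs_inj ((n:ℤ)-1) i (by omega) hi1 (by rw [h, hwin])
    omega
  have hcne_n1 : |w ((n : ℤ) - 1)| ≠ (n : ℤ) - 1 := by
    intro h
    have := habs_inj ((n:ℤ)-1) k (by omega) hk1 (by rw [h, hwk])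
    omega
  have hcne_m : |w ((n : ℤ) - 1)| ≠ |w (n : ℤ)| := by
    intro h
    have := habs_inj ((n:ℤ)-1) (n:ℤ) (by omega) (by omega) h
    omega
  -- step 5 : w i * c > 0
  have hic_pos : 0 < w i * w ((n : ℤ) - 1) := by
    rcases (mul_ne_zero (hne i (by omega)) hc0).lt_or_gt with h | h
    · exfalso
      obtain ⟨h1', -⟩ := master i ((n:ℤ)-1) hi1 (by omega) (by omega) h
        (by rw [hwin]; omega)
      omega
    · exact h
  -- step 6 : c * w n < 0
  have hcn_neg : w ((n : ℤ) - 1) * w (n : ℤ) < 0 := by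
    have := sign3 (x := w (n:ℤ)) (y := w ((n:ℤ)-1)) (z := w i)
      (by rw [mul_comm]; exact hprod) (by rw [mul_comm]; exact hic_pos)
    rw [mul_comm] at this
    exact this
  -- step 7 : |c| < |w n|
  have hrm : |w ((n : ℤ) - 1)| < |w (n : ℤ)| := by
    rcases lt_trichotomy (|w ((n:ℤ)-1)|) (|w (n:ℤ)|) with h | h | h
    · exact h
    · exact absurd h hcne_m
    · exfalso
      obtain ⟨-, h2'⟩ := master ((n:ℤ)-1) (n:ℤ) (by omega) (by omega) le_rfl hcn_neg h
      exact hcne_n h2'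
  -- step 8 : w k * c < 0
  have hkc_neg : w k * w ((n : ℤ) - 1) < 0 := by
    have := sign3 (x := w ((n:ℤ)-1)) (y := w k) (z := w (n:ℤ)) hcn_neg hkn_pos
    rw [mul_comm] at this
    exact this
  -- step 9 : final contradiction
  obtain ⟨h1', -⟩ := master k ((n:ℤ)-1) hk1 (by omega) (by omega) hkc_neg
    (by rw [hwk]; omega)
  omega
end
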